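/- arXiv:1706.00285 — 7 statements merged into one kernel-verified Lean document; each statement's English description precedes it below -/
import Mathlib

section
/- Conversely, if u, v : D → ℝ have continuous partial derivatives on D satisfying ∂u/∂θ = −r·∂v/∂r and ∂v/∂θ = r·∂u/∂r, then f = u + iv is polar-analytic on D, and its polar derivative satisfies D_pol f(r,θ) = e^{−iθ}(∂u/∂r + i·∂v/∂r) = (e^{−iθ}/r)(∂v/∂θ − i·∂u/∂θ). -/
open MeasureTheory Complex Filter Topology Set

noncomputable section

/-- The right half-plane `H = {(r,θ) : r > 0}` in polar coordinates. -/
def HH : Set (ℝ × ℝ) := {q | 0 < q.1}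

/-- The horizontal strip `ℍ_a = {(r,θ) : r > 0, |θ| < a}`. -/
def Hstrip (a : ℝ) : Set (ℝ × ℝ) := {q | 0 < q.1 ∧ |q.2| < a}

/-- `f` has polar derivative `L` at the point `p` (within the set `D`): the limit of the
difference quotient `(f(r,θ) - f(r₀,θ₀))/(re^{iθ} - r₀e^{iθ₀})` exists and equals `L`. -/
def HasPolarDerivAt (f : ℝ × ℝ → ℂ) (L : ℂ) (D : Set (ℝ × ℝ)) (p : ℝ × ℝ) : Prop :=
  Filter.Tendsto
    (fun q : ℝ × ℝ =>
      (f q - f p) /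
        ((q.1 : ℂ) * Complex.exp (Complex.I * q.2) - (p.1 : ℂ) * Complex.exp (Complex.I * p.2)))
    (nhdsWithin p (D \ {p})) (nhds L)

/-- `f` is polar-analytic on `D`. -/
def PolarAnalyticOn (f : ℝ × ℝ → ℂ) (D : Set (ℝ × ℝ)) : Prop :=
  ∀ p ∈ D, ∃ L : ℂ, HasPolarDerivAt f L D p

/-- Membership in the Mellin space `X^p_c`. -/
def MemX (c p : ℝ) (φ : ℝ → ℂ) : Prop :=
  AEStronglyMeasurable φ (volume.restrict (Set.Ioi 0)) ∧
    IntegrableOn (fun r : ℝ => ‖φ r‖ ^ p * r ^ (c * p - 1)) (Set.Ioi 0)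

/-- The norm of `X^p_c`. -/
def Xnorm (c p : ℝ) (φ : ℝ → ℂ) : ℝ :=
  (∫ r in Set.Ioi (0 : ℝ), ‖φ r‖ ^ p * r ^ (c * p - 1)) ^ (1 / p)

/-- The Mellin--Bernstein space `𝓑^p_{c,T}`. -/
def MemBernstein (c T p : ℝ) (f : ℝ × ℝ → ℂ) : Prop :=
  PolarAnalyticOn f HH ∧ MemX c p (fun r => f (r, 0)) ∧
    ∃ C : ℝ, 0 < C ∧ ∀ r θ : ℝ, 0 < r → ‖f (r, θ)‖ ≤ C * r ^ (-c) * Real.exp (T * |θ|)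

/-- The set of values whose supremum defines the Mellin--Hardy norm. -/
def hardyVals (c p a : ℝ) (f : ℝ × ℝ → ℂ) : Set ℝ :=
  {v | ∃ θ : ℝ, 0 < θ ∧ θ < a ∧
    v = (((Xnorm c p fun r => f (r, θ)) ^ p + (Xnorm c p fun r => f (r, -θ)) ^ p) / 2) ^ (1 / p)}

/-- Membership in the Mellin--Hardy space `H^p_c(ℍ_a)`. -/
def MemHardy (c p a : ℝ) (f : ℝ × ℝ → ℂ) : Prop :=
  PolarAnalyticOn f (Hstrip a) ∧ (∀ θ : ℝ, |θ| < a → MemX c p fun r => f (r, θ)) ∧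
    BddAbove (hardyVals c p a f)

/-- The Mellin--Hardy norm. -/
def HardyNorm (c p a : ℝ) (f : ℝ × ℝ → ℂ) : ℝ :=
  sSup (hardyVals c p a f)

/-- `Mφ` is the Mellin--Plancherel transform (`p = 2`) of `φ` on the line `c + iℝ`:
the truncated Mellin integrals converge to `Mφ` in the `L²` sense. -/
def IsMellin2 (c : ℝ) (φ Mφ : ℝ → ℂ) : Prop :=
  MeasureTheory.MemLp Mφ 2 (volume : Measure ℝ) ∧
    Filter.Tendsto
      (fun ρ : ℝ => ∫ t : ℝ,
        ‖Mφ t - ∫ u in Set.Ioo (1 / ρ) ρ,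
            φ u * Complex.exp (((c : ℂ) + Complex.I * t - 1) * Real.log u)‖ ^ 2)
      Filter.atTop (nhds 0)

/-- The Mellin transform evaluated on the line `c + iℝ` (for `p = 1`). -/
def mellinAt (c : ℝ) (φ : ℝ → ℂ) (t : ℝ) : ℂ :=
  mellin φ ((c : ℂ) + Complex.I * t)

end

section AuxCR

open Complex Asymptotics Metric

/-- The candidate Fréchet derivative built from two partial derivatives. -/
noncomputable def pder (a b : ℂ) : (ℝ × ℝ) →L[ℝ] ℂ :=
  a • (Complex.ofRealCLM.comp (ContinuousLinearMap.fst ℝ ℝ ℝ)) +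
    b • (Complex.ofRealCLM.comp (ContinuousLinearMap.snd ℝ ℝ ℝ))

lemma pder_apply (a b : ℂ) (x : ℝ × ℝ) : pder a b x = a * x.1 + b * x.2 := by
  simp [pder, smul_eq_mul]

/-- A function of two real variables with continuous partial derivatives is
(Fréchet) differentiable. -/
lemma hasFDerivAt_of_partials {D : Set (ℝ × ℝ)} (hD : IsOpen D) {f f₁ f₂ : ℝ × ℝ → ℂ}
    (h1 : ∀ q ∈ D, HasDerivAt (fun r : ℝ => f (r, q.2)) (f₁ q) q.1)
    (h2 : ∀ q ∈ D, HasDerivAt (fun θ : ℝ => f (q.1, θ)) (f₂ q) q.2)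
    (h1c : ContinuousOn f₁ D) (h2c : ContinuousOn f₂ D)
    {p : ℝ × ℝ} (hp : p ∈ D) :
    HasFDerivAt f (pder (f₁ p) (f₂ p)) p := by
  apply HasFDerivAt.of_isLittleO
  rw [Asymptotics.isLittleO_iff]
  intro ε hε
  have hε2 : 0 < ε / 2 := by linarith
  have c1 : ∀ᶠ q in nhds p, ‖f₁ q - f₁ p‖ ≤ ε / 2 := by
    have h := h1c.continuousAt (hD.mem_nhds hp)
    filter_upwards [h (Metric.closedBall_mem_nhds (f₁ p) hε2)] with q hq
    simpa [Metric.mem_closedBall, dist_eq_norm] using hq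
  have c2 : ∀ᶠ q in nhds p, ‖f₂ q - f₂ p‖ ≤ ε / 2 := by
    have h := h2c.continuousAt (hD.mem_nhds hp)
    filter_upwards [h (Metric.closedBall_mem_nhds (f₂ p) hε2)] with q hq
    simpa [Metric.mem_closedBall, dist_eq_norm] using hq
  have cD : ∀ᶠ q in nhds p, q ∈ D := hD.mem_nhds hp
  obtain ⟨δ, hδpos, hδ⟩ := Metric.eventually_nhds_iff_ball.mp ((c1.and c2).and cD)
  filter_upwards [Metric.ball_mem_nhds p hδpos] with q hq
  -- membership facts
  have hprod : ∀ {a b : ℝ}, a ∈ ball p.1 δ → b ∈ ball p.2 δ → ((a, b) : ℝ × ℝ) ∈ ball p δ := by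
    intro a b ha hb
    have : ((a, b) : ℝ × ℝ) ∈ ball p.1 δ ×ˢ ball p.2 δ := ⟨ha, hb⟩
    rwa [ball_prod_same, Prod.mk.eta] at this
  have hq' : q ∈ ball p.1 δ ×ˢ ball p.2 δ := by
    rw [ball_prod_same, Prod.mk.eta]; exact hq
  have hq1 : q.1 ∈ ball p.1 δ := hq'.1
  have hq2 : q.2 ∈ ball p.2 δ := hq'.2
  have hc1 : p.1 ∈ ball p.1 δ := mem_ball_self hδpos
  have hc2 : p.2 ∈ ball p.2 δ := mem_ball_self hδpos
  -- first term : variation in the first coordinate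
  have key1 : ‖(f (q.1, q.2) - (q.1 : ℂ) * f₁ p) - (f (p.1, q.2) - (p.1 : ℂ) * f₁ p)‖
      ≤ (ε / 2) * ‖q.1 - p.1‖ := by
    refine Convex.norm_image_sub_le_of_norm_hasDerivWithin_le
      (f := fun s : ℝ => f (s, q.2) - (s : ℂ) * f₁ p)
      (f' := fun s : ℝ => f₁ (s, q.2) - f₁ p) ?_ ?_ (convex_ball _ _) hc1 hq1
    · intro s hs
      have hmem : ((s, q.2) : ℝ × ℝ) ∈ D := (hδ _ (hprod hs hq2)).2
      have hd : HasDerivAt (fun s : ℝ => f (s, q.2)) (f₁ (s, q.2)) s := h1 (s, q.2) hmem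
      have hlin : HasDerivAt (fun s : ℝ => (s : ℂ) * f₁ p) (f₁ p) s := by
        simpa using ((hasDerivAt_id s).ofReal_comp.mul_const (f₁ p))
      exact (hd.sub hlin).hasDerivWithinAt
    · intro s hs
      exact ((hδ _ (hprod hs hq2)).1).1
  -- second term : variation in the second coordinate
  have key2 : ‖(f (p.1, q.2) - (q.2 : ℂ) * f₂ p) - (f (p.1, p.2) - (p.2 : ℂ) * f₂ p)‖
      ≤ (ε / 2) * ‖q.2 - p.2‖ := by
    refine Convex.norm_image_sub_le_of_norm_hasDerivWithin_le
      (f := fun s : ℝ => f (p.1, s) - (s : ℂ) * f₂ p)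
      (f' := fun s : ℝ => f₂ (p.1, s) - f₂ p) ?_ ?_ (convex_ball _ _) hc2 hq2
    · intro s hs
      have hmem : ((p.1, s) : ℝ × ℝ) ∈ D := (hδ _ (hprod hc1 hs)).2
      have hd : HasDerivAt (fun s : ℝ => f (p.1, s)) (f₂ (p.1, s)) s := h2 (p.1, s) hmem
      have hlin : HasDerivAt (fun s : ℝ => (s : ℂ) * f₂ p) (f₂ p) s := by
        simpa using ((hasDerivAt_id s).ofReal_comp.mul_const (f₂ p))
      exact (hd.sub hlin).hasDerivWithinAt
    · intro s hs
      exact ((hδ _ (hprod hc1 hs)).1).2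
  have decomp : f q - f p - pder (f₁ p) (f₂ p) (q - p)
      = ((f (q.1, q.2) - (q.1 : ℂ) * f₁ p) - (f (p.1, q.2) - (p.1 : ℂ) * f₁ p))
        + ((f (p.1, q.2) - (q.2 : ℂ) * f₂ p) - (f (p.1, p.2) - (p.2 : ℂ) * f₂ p)) := by
    rw [pder_apply]
    simp only [Prod.fst_sub, Prod.snd_sub, Complex.ofReal_sub, Prod.mk.eta]
    ring
  rw [decomp]
  have hn1 : ‖q.1 - p.1‖ ≤ ‖q - p‖ := by
    simpa [Prod.fst_sub] using norm_fst_le (q - p)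
  have hn2 : ‖q.2 - p.2‖ ≤ ‖q - p‖ := by
    simpa [Prod.snd_sub] using norm_snd_le (q - p)
  calc ‖_ + _‖ ≤ _ + _ := norm_add_le _ _
    _ ≤ (ε / 2) * ‖q - p‖ + (ε / 2) * ‖q - p‖ := by
        gcongr
        · exact key1.trans (by gcongr)
        · exact key2.trans (by gcongr)
    _ = ε * ‖q - p‖ := by ring

/-- Fréchet derivative of the polar coordinate map `ψ (r, θ) = r e^{iθ}`. -/
lemma hasFDerivAt_psi (p : ℝ × ℝ) :
    HasFDerivAt (fun q : ℝ × ℝ => (q.1 : ℂ) * Complex.exp (Complex.I * q.2))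
      (pder (Complex.exp (Complex.I * p.2)) ((p.1 : ℂ) * Complex.I * Complex.exp (Complex.I * p.2)))
      p := by
  apply hasFDerivAt_of_partials (D := Set.univ) isOpen_univ
      (f₁ := fun q : ℝ × ℝ => Complex.exp (Complex.I * q.2))
      (f₂ := fun q : ℝ × ℝ => (q.1 : ℂ) * Complex.I * Complex.exp (Complex.I * q.2))
  · intro q _
    simpa using ((hasDerivAt_id q.1).ofReal_comp.mul_const (Complex.exp (Complex.I * q.2)))
  · intro q _
    have hexp : HasDerivAt (fun θ : ℝ => Complex.exp (Complex.I * θ))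
        (Complex.I * Complex.exp (Complex.I * q.2)) q.2 := by
      have h1 : HasDerivAt (fun w : ℂ => Complex.exp (Complex.I * w))
          (Complex.exp (Complex.I * q.2) * Complex.I) (q.2 : ℂ) :=
        (Complex.hasDerivAt_exp _).comp _
          (by simpa using (hasDerivAt_id ((q.2 : ℝ) : ℂ)).const_mul Complex.I)
      simpa [mul_comm] using h1.comp_ofReal
    simpa [mul_assoc] using hexp.const_mul (q.1 : ℂ)
  · exact (Continuous.continuousOn (by fun_prop))
  · exact (Continuous.continuousOn (by fun_prop))
  · trivial

end AuxCR


/-- If `u, v` have continuous partial derivatives satisfying the polar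
Cauchy–Riemann equations on `D`, then `f = u + iv` is polar-analytic on `D` and
`D_pol f = e^{-iθ}(∂u/∂r + i ∂v/∂r) = (e^{-iθ}/r)(∂v/∂θ - i ∂u/∂θ)`. -/
theorem CR_implies_polar_analytic
    (D : Set (ℝ × ℝ)) (hD : IsOpen D) (hDconn : IsConnected D) (hDsub : D ⊆ HH)
    (u v : ℝ × ℝ → ℝ) (f : ℝ × ℝ → ℂ)
    (hf : ∀ q : ℝ × ℝ, f q = (u q : ℂ) + (v q : ℂ) * Complex.I)
    (ur uθ vr vθ : ℝ × ℝ → ℝ)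
    (hur : ∀ q ∈ D, HasDerivAt (fun r : ℝ => u (r, q.2)) (ur q) q.1)
    (huθ : ∀ q ∈ D, HasDerivAt (fun θ : ℝ => u (q.1, θ)) (uθ q) q.2)
    (hvr : ∀ q ∈ D, HasDerivAt (fun r : ℝ => v (r, q.2)) (vr q) q.1)
    (hvθ : ∀ q ∈ D, HasDerivAt (fun θ : ℝ => v (q.1, θ)) (vθ q) q.2)
    (hurC : ContinuousOn ur D) (huθC : ContinuousOn uθ D)
    (hvrC : ContinuousOn vr D) (hvθC : ContinuousOn vθ D)
    (hCR1 : ∀ q ∈ D, uθ q = -q.1 * vr q)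
    (hCR2 : ∀ q ∈ D, vθ q = q.1 * ur q) :
    PolarAnalyticOn f D ∧
      ∀ q ∈ D,
        HasPolarDerivAt f
          (Complex.exp (-Complex.I * q.2) * ((ur q : ℂ) + Complex.I * (vr q : ℂ))) D q ∧
        Complex.exp (-Complex.I * q.2) * ((ur q : ℂ) + Complex.I * (vr q : ℂ)) =
          (Complex.exp (-Complex.I * q.2) / (q.1 : ℂ)) *
            ((vθ q : ℂ) - Complex.I * (uθ q : ℂ)) := by
  have main : ∀ p ∈ D, HasPolarDerivAt f
      (Complex.exp (-Complex.I * p.2) * ((ur p : ℂ) + Complex.I * (vr p : ℂ))) D p := by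
    intro p hp
    have hr0 : (0 : ℝ) < p.1 := hDsub hp
    set ψ : ℝ × ℝ → ℂ := fun q => (q.1 : ℂ) * Complex.exp (Complex.I * q.2) with hψdef
    set L : ℂ := Complex.exp (-Complex.I * p.2) * ((ur p : ℂ) + Complex.I * (vr p : ℂ))
      with hLdef
    -- partial derivatives of f
    have h1 : ∀ q ∈ D, HasDerivAt (fun r : ℝ => f (r, q.2))
        ((ur q : ℂ) + Complex.I * (vr q : ℂ)) q.1 := by
      intro q hq
      have heq : (fun r : ℝ => f (r, q.2))
          = fun r : ℝ => ((u (r, q.2) : ℂ) + (v (r, q.2) : ℂ) * Complex.I) :=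
        funext fun r => hf _
      rw [heq]
      have h := ((hur q hq).ofReal_comp).add (((hvr q hq).ofReal_comp).mul_const Complex.I)
      convert h using 1
      · rfl
      · rfl
      ring
    have h2 : ∀ q ∈ D, HasDerivAt (fun θ : ℝ => f (q.1, θ))
        ((uθ q : ℂ) + Complex.I * (vθ q : ℂ)) q.2 := by
      intro q hq
      have heq : (fun θ : ℝ => f (q.1, θ))
          = fun θ : ℝ => ((u (q.1, θ) : ℂ) + (v (q.1, θ) : ℂ) * Complex.I) :=
        funext fun θ => hf _
      rw [heq]
      have h := ((huθ q hq).ofReal_comp).add (((hvθ q hq).ofReal_comp).mul_const Complex.I)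
      convert h using 1
      · rfl
      · rfl
      ring
    have h1c : ContinuousOn (fun q : ℝ × ℝ => (ur q : ℂ) + Complex.I * (vr q : ℂ)) D :=
      (Complex.continuous_ofReal.comp_continuousOn hurC).add
        (continuousOn_const.mul (Complex.continuous_ofReal.comp_continuousOn hvrC))
    have h2c : ContinuousOn (fun q : ℝ × ℝ => (uθ q : ℂ) + Complex.I * (vθ q : ℂ)) D :=
      (Complex.continuous_ofReal.comp_continuousOn huθC).add
        (continuousOn_const.mul (Complex.continuous_ofReal.comp_continuousOn hvθC))
    have hF := hasFDerivAt_of_partials hD h1 h2 h1c h2c hp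
    have hψd := hasFDerivAt_psi p
    have he : Complex.exp (-Complex.I * p.2) * Complex.exp (Complex.I * p.2) = 1 := by
      rw [← Complex.exp_add]
      norm_num
    have comp1 : L * Complex.exp (Complex.I * p.2)
        = (ur p : ℂ) + Complex.I * (vr p : ℂ) := by
      have h : L * Complex.exp (Complex.I * p.2)
          = (Complex.exp (-Complex.I * p.2) * Complex.exp (Complex.I * p.2))
            * ((ur p : ℂ) + Complex.I * (vr p : ℂ)) := by rw [hLdef]; ring
      rw [h, he, one_mul]
    have comp2 : L * ((p.1 : ℂ) * Complex.I * Complex.exp (Complex.I * p.2))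
        = (uθ p : ℂ) + Complex.I * (vθ p : ℂ) := by
      have h : L * ((p.1 : ℂ) * Complex.I * Complex.exp (Complex.I * p.2))
          = (Complex.exp (-Complex.I * p.2) * Complex.exp (Complex.I * p.2))
            * ((p.1 : ℂ) * Complex.I * ((ur p : ℂ) + Complex.I * (vr p : ℂ))) := by
        rw [hLdef]; ring
      rw [h, he, one_mul, hCR1 p hp, hCR2 p hp]
      push_cast
      linear_combination (p.1 : ℂ) * (vr p : ℂ) * Complex.I_sq
    have hCLM : pder ((ur p : ℂ) + Complex.I * (vr p : ℂ))
          ((uθ p : ℂ) + Complex.I * (vθ p : ℂ))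
        = L • pder (Complex.exp (Complex.I * p.2))
            ((p.1 : ℂ) * Complex.I * Complex.exp (Complex.I * p.2)) := by
      apply ContinuousLinearMap.ext
      intro x
      rw [ContinuousLinearMap.smul_apply, pder_apply, pder_apply, smul_eq_mul,
        ← comp1, ← comp2]
      ring
    have hg : HasFDerivAt (fun q : ℝ × ℝ => f q - L * ψ q) (0 : (ℝ × ℝ) →L[ℝ] ℂ) p := by
      have h := hF.sub (hψd.const_mul L)
      have h0 : pder ((ur p : ℂ) + Complex.I * (vr p : ℂ))
            ((uθ p : ℂ) + Complex.I * (vθ p : ℂ))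
          - L • pder (Complex.exp (Complex.I * p.2))
              ((p.1 : ℂ) * Complex.I * Complex.exp (Complex.I * p.2)) = 0 := by
        rw [hCLM]; simp
      rwa [h0] at h
    have hsmall : (fun q : ℝ × ℝ => (f q - L * ψ q) - (f p - L * ψ p))
        =o[nhds p] fun q : ℝ × ℝ => q - p := by
      simpa using hg.isLittleO
    set c : ℝ := min 1 p.1 with hcdef
    have hcpos : 0 < c := lt_min one_pos hr0
    have hlow : ∀ x : ℝ × ℝ, c * ‖x‖ ≤
        ‖pder (Complex.exp (Complex.I * p.2))
          ((p.1 : ℂ) * Complex.I * Complex.exp (Complex.I * p.2)) x‖ := by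
      intro x
      have hz : pder (Complex.exp (Complex.I * p.2))
            ((p.1 : ℂ) * Complex.I * Complex.exp (Complex.I * p.2)) x
          = Complex.exp (Complex.I * p.2)
            * ((x.1 : ℂ) + ((p.1 * x.2 : ℝ) : ℂ) * Complex.I) := by
        rw [pder_apply]; push_cast; ring
      have hne : ‖Complex.exp (Complex.I * (p.2 : ℂ))‖ = 1 := by
        simp [Complex.norm_exp, Complex.mul_re]
      rw [hz, norm_mul, hne, one_mul]
      set z : ℂ := (x.1 : ℂ) + ((p.1 * x.2 : ℝ) : ℂ) * Complex.I with hzdef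
      have hre : z.re = x.1 := by simp [hzdef]
      have him : z.im = p.1 * x.2 := by simp [hzdef]
      have hz1 : |x.1| ≤ ‖z‖ := by
        rw [← hre]; exact Complex.abs_re_le_norm z
      have hz2 : p.1 * |x.2| ≤ ‖z‖ := by
        have h := Complex.abs_im_le_norm z
        rw [him, abs_mul, abs_of_pos hr0] at h
        exact h
      have hxn : ‖x‖ = max |x.1| |x.2| := by
        rw [Prod.norm_def]; simp [Real.norm_eq_abs]
      rw [hxn]
      rcases le_total |x.2| |x.1| with h | h
      · rw [max_eq_left h]
        calc c * |x.1| ≤ 1 * |x.1| := by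
              have := min_le_left (1 : ℝ) p.1
              exact mul_le_mul_of_nonneg_right (by rw [hcdef]; exact this) (abs_nonneg _)
          _ = |x.1| := one_mul _
          _ ≤ ‖z‖ := hz1
      · rw [max_eq_right h]
        calc c * |x.2| ≤ p.1 * |x.2| := by
              have := min_le_right (1 : ℝ) p.1
              exact mul_le_mul_of_nonneg_right (by rw [hcdef]; exact this) (abs_nonneg _)
          _ ≤ ‖z‖ := hz2
    have hden : ∀ᶠ q in nhds p, (c / 2) * ‖q - p‖ ≤ ‖ψ q - ψ p‖ := by
      have h := Asymptotics.isLittleO_iff.mp hψd.isLittleO (half_pos hcpos)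
      filter_upwards [h] with q hq
      have h1 := hlow (q - p)
      have h4 : ‖pder (Complex.exp (Complex.I * p.2))
            ((p.1 : ℂ) * Complex.I * Complex.exp (Complex.I * p.2)) (q - p)‖
          - ‖ψ q - ψ p‖ ≤ c / 2 * ‖q - p‖ := by
        calc ‖pder (Complex.exp (Complex.I * p.2))
              ((p.1 : ℂ) * Complex.I * Complex.exp (Complex.I * p.2)) (q - p)‖
            - ‖ψ q - ψ p‖
            ≤ ‖pder (Complex.exp (Complex.I * p.2))
              ((p.1 : ℂ) * Complex.I * Complex.exp (Complex.I * p.2)) (q - p)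
              - (ψ q - ψ p)‖ := norm_sub_norm_le _ _
          _ = ‖ψ q - ψ p - pder (Complex.exp (Complex.I * p.2))
              ((p.1 : ℂ) * Complex.I * Complex.exp (Complex.I * p.2)) (q - p)‖ :=
            norm_sub_rev _ _
          _ ≤ c / 2 * ‖q - p‖ := hq
      linarith
    have hsne : ∀ᶠ q in nhdsWithin p (D \ {p}), q ∈ D \ {p} :=
      eventually_mem_nhdsWithin
    have hden' : ∀ᶠ q in nhdsWithin p (D \ {p}),
        ψ q - ψ p ≠ 0 ∧ ‖q - p‖ ≤ (2 / c) * ‖ψ q - ψ p‖ := by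
      filter_upwards [hden.filter_mono nhdsWithin_le_nhds, hsne] with q h1 h2
      have hqp : q ≠ p := h2.2
      have hnorm : 0 < ‖q - p‖ := by
        rw [norm_pos_iff, sub_ne_zero]; exact hqp
      have hpos : 0 < ‖ψ q - ψ p‖ := lt_of_lt_of_le (by positivity) h1
      refine ⟨norm_pos_iff.mp hpos, ?_⟩
      have heq : ‖q - p‖ = (2 / c) * ((c / 2) * ‖q - p‖) := by
        field_simp
      rw [heq]
      exact mul_le_mul_of_nonneg_left h1 (by positivity)
    have hO : (fun q : ℝ × ℝ => q - p) =O[nhdsWithin p (D \ {p})] fun q => ψ q - ψ p := by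
      rw [Asymptotics.isBigO_iff]
      exact ⟨2 / c, by filter_upwards [hden'] with q hq using hq.2⟩
    have hlit : (fun q : ℝ × ℝ => (f q - L * ψ q) - (f p - L * ψ p))
        =o[nhdsWithin p (D \ {p})] fun q => ψ q - ψ p :=
      (hsmall.mono nhdsWithin_le_nhds).trans_isBigO hO
    have h0 := hlit.tendsto_div_nhds_zero
    have hfinal : Filter.Tendsto (fun q : ℝ × ℝ => (f q - f p) / (ψ q - ψ p))
        (nhdsWithin p (D \ {p})) (nhds L) := by
      have hadd : Filter.Tendsto
          (fun q : ℝ × ℝ => ((f q - L * ψ q) - (f p - L * ψ p)) / (ψ q - ψ p) + L)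
          (nhdsWithin p (D \ {p})) (nhds L) := by
        simpa using h0.add_const L
      refine hadd.congr' ?_
      filter_upwards [hden'] with q hq
      have hd := hq.1
      field_simp
      ring
    exact hfinal
  refine ⟨fun p hp => ⟨_, main p hp⟩, fun q hq => ⟨main q hq, ?_⟩⟩
  rw [hCR1 q hq, hCR2 q hq]
  have hr : (q.1 : ℂ) ≠ 0 := by
    exact_mod_cast (hDsub hq).ne'
  push_cast
  field_simp
  ring
end

section
/- If f is polar-analytic on the whole right half-plane H, then the line integral ∫_γ f(r,θ) e^{iθ}(dr + i r dθ) has the same value for every piecewise continuously differentiable curve γ in H joining two fixed points (r₁,θ₁) and (r₂,θ₂); in particular the integral vanishes over every closed regular curve in H. -/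
open MeasureTheory Complex Filter Topology Set

/-- A regular (piecewise continuously differentiable) curve on `[a,b]` with values in `HH`,
with derivative `γ'` off a finite exceptional set, continuous there and bounded. -/
def RegularCurveIn (γ γ' : ℝ → ℝ × ℝ) (a b : ℝ) : Prop :=
  a ≤ b ∧ ContinuousOn γ (Set.Icc a b) ∧ (∀ t ∈ Set.Icc a b, γ t ∈ HH) ∧
    ∃ S : Finset ℝ,
      (∀ t ∈ Set.Icc a b \ (S : Set ℝ), HasDerivAt γ (γ' t) t) ∧
      ContinuousOn γ' (Set.Icc a b \ (S : Set ℝ)) ∧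
      ∃ M : ℝ, ∀ t ∈ Set.Icc a b, ‖γ' t‖ ≤ M

/-- The line integral `∫_γ f(r,θ) e^{iθ}(dr + i r dθ)` along a parametrized curve. -/
noncomputable def polarLineIntegral (f : ℝ × ℝ → ℂ) (γ γ' : ℝ → ℝ × ℝ) (a b : ℝ) : ℂ :=
  ∫ t in a..b,
    f (γ t) * Complex.exp (Complex.I * (γ t).2) *
      (((γ' t).1 : ℂ) + Complex.I * ((γ t).1 : ℂ) * ((γ' t).2 : ℂ))

/-- The function `z ↦ f(e^{Re z}, Im z)` is entire when `f` is polar-analytic on `H`. -/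
lemma gfun_hasDerivAt (f : ℝ × ℝ → ℂ) (hf : PolarAnalyticOn f HH) (z : ℂ) :
    ∃ L : ℂ, HasDerivAt (fun w : ℂ => f (Real.exp w.re, w.im)) L z := by
  set p : ℝ × ℝ := (Real.exp z.re, z.im) with hp
  obtain ⟨L, hL⟩ := hf p (by simp [hp, HH, Real.exp_pos])
  refine ⟨L * Complex.exp z, ?_⟩
  rw [hasDerivAt_iff_tendsto_slope]
  have hΦ : ∀ w : ℂ,
      ((Real.exp w.re : ℝ) : ℂ) * Complex.exp (Complex.I * w.im) = Complex.exp w := by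
    intro w
    rw [Complex.ofReal_exp, ← Complex.exp_add]
    congr 1
    rw [mul_comm]
    exact Complex.re_add_im w
  have hq : Tendsto (fun w : ℂ => ((Real.exp w.re, w.im) : ℝ × ℝ)) (𝓝[≠] z)
      (𝓝[HH \ {p}] p) := by
    rw [tendsto_nhdsWithin_iff]
    constructor
    · refine Tendsto.mono_left ?_ nhdsWithin_le_nhds
      exact ((Real.continuous_exp.comp Complex.continuous_re).prodMk
        Complex.continuous_im).tendsto' z p rfl
    · filter_upwards [self_mem_nhdsWithin] with w hw
      refine ⟨by simp [HH, Real.exp_pos], ?_⟩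
      simp only [Set.mem_singleton_iff]
      intro hqp
      apply hw
      have h1 : Real.exp w.re = Real.exp z.re := congrArg Prod.fst hqp
      have h2 : w.im = z.im := congrArg Prod.snd hqp
      exact Complex.ext (Real.exp_injective h1) h2
  have A : Tendsto (fun w : ℂ =>
      (f (Real.exp w.re, w.im) - f p) / (Complex.exp w - Complex.exp z)) (𝓝[≠] z) (𝓝 L) := by
    have h1 := hL.comp hq
    refine h1.congr fun w => ?_
    have e2 : ((p.1 : ℝ) : ℂ) * Complex.exp (Complex.I * (p.2 : ℂ)) = Complex.exp z := hΦ z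
    simp only [Function.comp_def]
    rw [e2, hΦ w]
  have B : Tendsto (slope Complex.exp z) (𝓝[≠] z) (𝓝 (Complex.exp z)) :=
    hasDerivAt_iff_tendsto_slope.1 (Complex.hasDerivAt_exp z)
  refine (A.mul B).congr' ?_
  have hball : Metric.ball z 1 ∈ 𝓝[≠] z :=
    nhdsWithin_le_nhds (Metric.ball_mem_nhds z one_pos)
  filter_upwards [hball, self_mem_nhdsWithin] with w hw hne
  have hne' : w ≠ z := hne
  have hexp : Complex.exp w ≠ Complex.exp z := by
    intro h
    rcases Complex.exp_eq_exp_iff_exists_int.1 h with ⟨n, hn⟩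
    rcases eq_or_ne n 0 with h0 | h0
    · apply hne'; rw [hn, h0]; simp
    · have h1 : (1 : ℝ) ≤ |(n : ℝ)| := by exact_mod_cast Int.one_le_abs h0
      have hd : dist w z < 1 := Metric.mem_ball.1 hw
      rw [dist_eq_norm, hn] at hd
      have : ‖z + (n : ℂ) * (2 * Real.pi * Complex.I) - z‖
          = |(n : ℝ)| * (2 * Real.pi) := by
        rw [add_sub_cancel_left, norm_mul]
        simp [abs_of_pos Real.pi_pos, mul_comm, Complex.norm_intCast]
        try ring
      rw [this] at hd
      nlinarith [Real.pi_gt_three]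
  have hwz : w - z ≠ 0 := sub_ne_zero.2 hne'
  have hez : Complex.exp w - Complex.exp z ≠ 0 := sub_ne_zero.2 hexp
  rw [slope_def_field, slope_def_field]
  field_simp
  try ring

/-- Every entire function has a primitive. -/
lemma exists_primitive {h : ℂ → ℂ} (hh : Differentiable ℂ h) :
    ∃ G : ℂ → ℂ, ∀ z, HasDerivAt G (h z) z := by
  set a : ℕ → ℂ := fun n => (n.factorial : ℂ)⁻¹ * iteratedDeriv n h 0 with ha
  set g : ℕ → ℂ → ℂ := fun n z => a n / ((n : ℂ) + 1) * z ^ (n + 1) with hgdef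
  have hnz : ∀ n : ℕ, ((n : ℂ) + 1) ≠ 0 := fun n => Nat.cast_add_one_ne_zero n
  have hderiv : ∀ (n : ℕ) (y : ℂ), HasDerivAt (g n) (a n * y ^ n) y := by
    intro n y
    have h1 := (hasDerivAt_pow (n + 1) y).const_mul (a n / ((n : ℂ) + 1))
    refine h1.congr_deriv ?_
    rw [Nat.add_sub_cancel]
    push_cast
    rw [← mul_assoc, div_mul_cancel₀ _ (hnz n)]
  have hsum : ∀ z : ℂ, HasSum (fun n => a n * z ^ n) (h z) := by
    intro z
    have hts := hasSum_taylorSeries_of_entire hh 0 z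
    have hfe : (fun n : ℕ => (Nat.factorial n : ℂ)⁻¹ • (z - 0) ^ n • iteratedDeriv n h 0)
        = fun n => a n * z ^ n := by
      funext n
      simp only [ha, smul_eq_mul, sub_zero]
      ring
    rwa [hfe] at hts
  refine ⟨fun z => ∑' n, g n z, fun y => ?_⟩
  set R : ℝ := ‖y‖ + 1 with hR
  have hR0 : (0 : ℝ) < R := by positivity
  obtain ⟨C, hC⟩ : ∃ C : ℝ, ∀ n, ‖a n * ((2 * R : ℝ) : ℂ) ^ n‖ ≤ C := by
    have hs := (hsum ((2 * R : ℝ) : ℂ)).summable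
    have ht : Tendsto (fun n => ‖a n * ((2 * R : ℝ) : ℂ) ^ n‖) atTop (𝓝 0) := by
      simpa using hs.tendsto_atTop_zero.norm
    obtain ⟨C, hC⟩ := ht.bddAbove_range
    exact ⟨C, fun n => hC (Set.mem_range_self n)⟩
  have hC0 : (0 : ℝ) ≤ C := le_trans (norm_nonneg _) (hC 0)
  have hu : Summable (fun n : ℕ => C * (1 / 2 : ℝ) ^ n) :=
    (summable_geometric_of_lt_one (by norm_num) (by norm_num)).mul_left C
  have hg' : ∀ (n : ℕ) (x : ℂ), x ∈ Metric.ball (0 : ℂ) R → ‖a n * x ^ n‖ ≤ C * (1 / 2 : ℝ) ^ n := by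
    intro n x hx
    have hxR : ‖x‖ ≤ R := le_of_lt (by simpa using Metric.mem_ball.1 hx)
    have h1 : ‖a n‖ * (2 * R) ^ n ≤ C := by
      have := hC n
      rwa [norm_mul, norm_pow, Complex.norm_real, Real.norm_eq_abs,
        abs_of_pos (by linarith : (0 : ℝ) < 2 * R)] at this
    have h2 : ‖x‖ ^ n ≤ R ^ n := pow_le_pow_left₀ (norm_nonneg _) hxR n
    calc ‖a n * x ^ n‖ = ‖a n‖ * ‖x‖ ^ n := by rw [norm_mul, norm_pow]
      _ ≤ ‖a n‖ * R ^ n := by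
          exact mul_le_mul_of_nonneg_left h2 (norm_nonneg _)
      _ = (‖a n‖ * (2 * R) ^ n) * (1 / 2 : ℝ) ^ n := by
          rw [mul_assoc, ← mul_pow]; ring_nf
      _ ≤ C * (1 / 2 : ℝ) ^ n :=
          mul_le_mul_of_nonneg_right h1 (pow_nonneg (by norm_num) n)
  have hg0 : Summable (fun n => g n (0 : ℂ)) := by
    refine summable_zero.congr fun n => ?_
    simp [hgdef]
  have H := hasDerivAt_tsum_of_isPreconnected hu Metric.isOpen_ball
    ((convex_ball (0 : ℂ) R).isPreconnected)
    (fun n x _ => hderiv n x) hg' (Metric.mem_ball_self hR0) hg0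
    (show y ∈ Metric.ball (0 : ℂ) R by simpa [hR] using (lt_add_one ‖y‖))
  rwa [(hsum y).tsum_eq] at H

/-- Key lemma: the line integral equals the difference of a potential at the endpoints. -/
lemma polarLineIntegral_eq_sub (f : ℝ × ℝ → ℂ) (hf : PolarAnalyticOn f HH) :
    ∃ F : ℝ × ℝ → ℂ, ∀ γ γ' a b, RegularCurveIn γ γ' a b →
      polarLineIntegral f γ γ' a b = F (γ b) - F (γ a) := by
  set g : ℂ → ℂ := fun w => f (Real.exp w.re, w.im) with hgdef
  have hgdiff : Differentiable ℂ g := fun z =>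
    (gfun_hasDerivAt f hf z).choose_spec.differentiableAt
  obtain ⟨G, hG⟩ := exists_primitive (hgdiff.mul Complex.differentiable_exp)
  have hGc : Continuous G :=
    continuous_iff_continuousAt.2 fun z => (hG z).differentiableAt.continuousAt
  refine ⟨fun p => G (((Real.log p.1 : ℝ) : ℂ) + Complex.I * (p.2 : ℂ)), ?_⟩
  rintro γ γ' a b ⟨hab, hcont, hmem, S, hd, hd', M, hM⟩
  set w : ℝ → ℂ := fun t => ((Real.log (γ t).1 : ℝ) : ℂ) + Complex.I * ((γ t).2 : ℂ) with hw
  have hr : ∀ t ∈ Set.Icc a b, 0 < (γ t).1 := fun t ht => hmem t ht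
  have hwre : ∀ t, (w t).re = Real.log (γ t).1 := by
    intro t; simp [hw, Complex.add_re, Complex.mul_re]
  have hwim : ∀ t, (w t).im = (γ t).2 := by
    intro t; simp [hw, Complex.add_im, Complex.mul_im]
  have hgw : ∀ t ∈ Set.Icc a b, g (w t) = f (γ t) := by
    intro t ht
    simp only [hgdef, hwre, hwim]
    rw [Real.exp_log (hr t ht)]
  have hexpw : ∀ t ∈ Set.Icc a b,
      Complex.exp (w t) = ((γ t).1 : ℂ) * Complex.exp (Complex.I * ((γ t).2 : ℂ)) := by
    intro t ht
    rw [hw]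
    simp only
    rw [Complex.exp_add, ← Complex.ofReal_exp, Real.exp_log (hr t ht)]
  -- continuity of w
  have hrc : ContinuousOn (fun t => (γ t).1) (Set.Icc a b) :=
    continuous_fst.comp_continuousOn hcont
  have hθc : ContinuousOn (fun t => (γ t).2) (Set.Icc a b) :=
    continuous_snd.comp_continuousOn hcont
  have hwc : ContinuousOn w (Set.Icc a b) := by
    apply ContinuousOn.add
    · exact Complex.continuous_ofReal.comp_continuousOn
        (hrc.log fun t ht => (hr t ht).ne')
    · exact continuousOn_const.mul (Complex.continuous_ofReal.comp_continuousOn hθc)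
  set φ : ℝ → ℂ := fun t => f (γ t) * Complex.exp (Complex.I * ((γ t).2 : ℂ)) with hφ
  set ψ : ℝ → ℂ := fun t =>
    (((γ' t).1 : ℝ) : ℂ) + Complex.I * (((γ t).1 : ℝ) : ℂ) * (((γ' t).2 : ℝ) : ℂ) with hψ
  -- derivative off S
  have Hd : ∀ t ∈ Set.Ioo a b \ (S : Set ℝ), HasDerivAt (fun t => G (w t)) (φ t * ψ t) t := by
    rintro t ⟨ht, htS⟩
    have htIcc : t ∈ Set.Icc a b := Set.mem_Icc_of_Ioo ht
    have hγd : HasDerivAt γ (γ' t) t := hd t ⟨htIcc, htS⟩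
    have hr' : HasDerivAt (fun s => (γ s).1) (γ' t).1 t :=
      (ContinuousLinearMap.fst ℝ ℝ ℝ).hasFDerivAt.comp_hasDerivAt t hγd
    have hθ' : HasDerivAt (fun s => (γ s).2) (γ' t).2 t :=
      (ContinuousLinearMap.snd ℝ ℝ ℝ).hasFDerivAt.comp_hasDerivAt t hγd
    have hrt : (0 : ℝ) < (γ t).1 := hr t htIcc
    have hlog : HasDerivAt (fun s => Real.log ((γ s).1)) (((γ t).1)⁻¹ * (γ' t).1) t :=
      (Real.hasDerivAt_log hrt.ne').comp (h := fun s => (γ s).1) t hr'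
    have hlogC : HasDerivAt (fun s => ((Real.log ((γ s).1) : ℝ) : ℂ))
        ((((γ t).1)⁻¹ * (γ' t).1 : ℝ) : ℂ) t := hlog.ofReal_comp
    have hθC : HasDerivAt (fun s => (((γ s).2 : ℝ) : ℂ)) (((γ' t).2 : ℝ) : ℂ) t :=
      hθ'.ofReal_comp
    have hIθ : HasDerivAt (fun s => Complex.I * (((γ s).2 : ℝ) : ℂ))
        (Complex.I * (((γ' t).2 : ℝ) : ℂ)) t := hθC.const_mul Complex.I
    have hwd : HasDerivAt w
        (((((γ t).1)⁻¹ * (γ' t).1 : ℝ) : ℂ) + Complex.I * (((γ' t).2 : ℝ) : ℂ)) t :=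
      hlogC.add hIθ
    have hGF : HasFDerivAt G
        ((ContinuousLinearMap.smulRight (1 : ℂ →L[ℂ] ℂ) (g (w t) * Complex.exp (w t))).restrictScalars ℝ)
        (w t) := ((hG (w t)).hasFDerivAt).restrictScalars ℝ
    have hcomp := hGF.comp_hasDerivAt t hwd
    have heval : ((ContinuousLinearMap.smulRight (1 : ℂ →L[ℂ] ℂ)
          (g (w t) * Complex.exp (w t))).restrictScalars ℝ)
        (((((γ t).1)⁻¹ * (γ' t).1 : ℝ) : ℂ) + Complex.I * (((γ' t).2 : ℝ) : ℂ))
        = φ t * ψ t := by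
      rw [ContinuousLinearMap.coe_restrictScalars']
      simp only [ContinuousLinearMap.smulRight_apply, ContinuousLinearMap.one_apply,
        smul_eq_mul]
      rw [hgw t htIcc, hexpw t htIcc, hφ, hψ]
      have hne : ((γ t).1 : ℂ) ≠ 0 := Complex.ofReal_ne_zero.2 hrt.ne'
      push_cast
      field_simp
    rw [heval] at hcomp
    exact hcomp
  -- continuity of potential along curve
  have Hc : ContinuousOn (fun t => G (w t)) (Set.Icc a b) := hGc.comp_continuousOn hwc
  -- integrability
  have hφc : ContinuousOn φ (Set.Icc a b) := by
    apply ContinuousOn.mul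
    · refine ((hgdiff.continuous.comp_continuousOn hwc).congr ?_)
      intro t ht; exact (hgw t ht).symm
    · exact (Complex.continuous_exp.comp
        (continuous_const.mul (Complex.continuous_ofReal.comp continuous_snd))).comp_continuousOn
        hcont
  obtain ⟨C₁, hC₁⟩ := isCompact_Icc.exists_bound_of_continuousOn hφc
  obtain ⟨C₂, hC₂⟩ := isCompact_Icc.exists_bound_of_continuousOn hcont
  have hM0 : 0 ≤ M := le_trans (norm_nonneg _) (hM a (Set.left_mem_Icc.2 hab))
  have hC₂0 : 0 ≤ C₂ := le_trans (norm_nonneg _) (hC₂ a (Set.left_mem_Icc.2 hab))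
  have hC₁0 : 0 ≤ C₁ := le_trans (norm_nonneg _) (hC₁ a (Set.left_mem_Icc.2 hab))
  have hbound : ∀ t ∈ Set.Icc a b, ‖φ t * ψ t‖ ≤ C₁ * (M + C₂ * M) := by
    intro t ht
    have h1 : |(γ' t).1| ≤ M := le_trans (norm_fst_le (γ' t)) (hM t ht)
    have h2 : |(γ' t).2| ≤ M := le_trans (norm_snd_le (γ' t)) (hM t ht)
    have h3 : |(γ t).1| ≤ C₂ := le_trans (norm_fst_le (γ t)) (hC₂ t ht)
    have hψb : ‖ψ t‖ ≤ M + C₂ * M := by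
      refine le_trans (norm_add_le _ _) ?_
      have e1 : ‖(((γ' t).1 : ℝ) : ℂ)‖ = |(γ' t).1| := Complex.norm_real _
      have e2 : ‖Complex.I * (((γ t).1 : ℝ) : ℂ) * (((γ' t).2 : ℝ) : ℂ)‖
          = |(γ t).1| * |(γ' t).2| := by
        rw [norm_mul, norm_mul, Complex.norm_I, one_mul, Complex.norm_real,
          Complex.norm_real, Real.norm_eq_abs, Real.norm_eq_abs]
      rw [e1, e2]
      have : |(γ t).1| * |(γ' t).2| ≤ C₂ * M :=
        mul_le_mul h3 h2 (abs_nonneg _) hC₂0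
      linarith
    calc ‖φ t * ψ t‖ = ‖φ t‖ * ‖ψ t‖ := norm_mul _ _
      _ ≤ C₁ * (M + C₂ * M) :=
        mul_le_mul (hC₁ t ht) hψb (norm_nonneg _) hC₁0
  have hEmeas : MeasurableSet (Set.Icc a b \ (S : Set ℝ)) :=
    measurableSet_Icc.diff (S.countable_toSet.measurableSet)
  have hSnull : (volume : Measure ℝ) (S : Set ℝ) = 0 := S.countable_toSet.measure_zero _
  have haeeq : (Set.Icc a b \ (S : Set ℝ) : Set ℝ) =ᵐ[volume] (Set.Icc a b : Set ℝ) := by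
    refine MeasureTheory.diff_ae_eq_self.2 ?_
    exact measure_mono_null Set.inter_subset_right hSnull
  have hrestr : (volume : Measure ℝ).restrict (Set.Icc a b \ (S : Set ℝ))
      = (volume : Measure ℝ).restrict (Set.Icc a b) :=
    Measure.restrict_congr_set haeeq
  have hmeas : AEStronglyMeasurable (fun t => φ t * ψ t)
      ((volume : Measure ℝ).restrict (Set.Icc a b)) := by
    rw [← hrestr]
    refine ContinuousOn.aestronglyMeasurable ?_ hEmeas
    refine ContinuousOn.mul (hφc.mono Set.diff_subset) ?_
    apply ContinuousOn.add
    · exact Complex.continuous_ofReal.comp_continuousOn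
        (continuous_fst.comp_continuousOn hd')
    · refine ContinuousOn.mul ?_ ?_
      · exact continuousOn_const.mul (Complex.continuous_ofReal.comp_continuousOn
          ((hrc.mono Set.diff_subset)))
      · exact Complex.continuous_ofReal.comp_continuousOn
          (continuous_snd.comp_continuousOn hd')
  have Hi : IntervalIntegrable (fun t => φ t * ψ t) volume a b := by
    rw [intervalIntegrable_iff_integrableOn_Icc_of_le hab]
    refine Integrable.mono' (g := fun _ => C₁ * (M + C₂ * M)) ?_ hmeas ?_
    · exact integrableOn_const measure_Icc_lt_top.ne
    · exact (ae_restrict_iff' measurableSet_Icc).2 (ae_of_all _ hbound)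
  have key := MeasureTheory.integral_eq_of_hasDerivAt_off_countable_of_le
    (fun t => G (w t)) (fun t => φ t * ψ t) hab S.countable_toSet Hc Hd Hi
  simpa [polarLineIntegral, hφ, hψ, hw, mul_assoc] using key

/-- for a polar-analytic `f` on `H`, the line integral
`∫_γ f e^{iθ}(dr + i r dθ)` depends only on the endpoints of the regular curve `γ`;
in particular it vanishes on closed regular curves. -/
theorem polar_line_integral_path_independent
    (f : ℝ × ℝ → ℂ) (hf : PolarAnalyticOn f HH) :
    (∀ (γ γ' δ δ' : ℝ → ℝ × ℝ) (a b a' b' : ℝ),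
        RegularCurveIn γ γ' a b → RegularCurveIn δ δ' a' b' →
        γ a = δ a' → γ b = δ b' →
        polarLineIntegral f γ γ' a b = polarLineIntegral f δ δ' a' b') ∧
    (∀ (γ γ' : ℝ → ℝ × ℝ) (a b : ℝ),
        RegularCurveIn γ γ' a b → γ a = γ b →
        polarLineIntegral f γ γ' a b = 0) := by
  obtain ⟨F, hF⟩ := polarLineIntegral_eq_sub f hf
  constructor
  · intro γ γ' δ δ' a b a' b' hγ hδ ha hb
    rw [hF γ γ' a b hγ, hF δ δ' a' b' hδ, ha, hb]
  · intro γ γ' a b hγ hab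
    rw [hF γ γ' a b hγ, hab, sub_self]
end

section
/- If f is polar-analytic on H, then the function g : ℂ → ℂ defined by g(x+iy) := f(eˣ, y) is an entire function. -/
open MeasureTheory Complex Filter Topology Set

/-- if `f` is polar-analytic on `H`, then `g(x+iy) := f(eˣ, y)` is entire. -/
theorem polar_analytic_gives_entire
    (f : ℝ × ℝ → ℂ) (hf : PolarAnalyticOn f HH) :
    Differentiable ℂ (fun z : ℂ => f (Real.exp z.re, z.im)) := by
  intro z
  have key : ∀ w : ℂ, ((Real.exp w.re : ℂ)) * Complex.exp (Complex.I * w.im) = Complex.exp w := by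
    intro w
    rw [Complex.ofReal_exp, ← Complex.exp_add]
    congr 1
    rw [mul_comm]
    exact Complex.re_add_im w
  set p : ℝ × ℝ := (Real.exp z.re, z.im) with hpdef
  have hp : p ∈ HH := Real.exp_pos _
  obtain ⟨L, hL⟩ := hf p hp
  have hT : Tendsto (fun w : ℂ => ((Real.exp w.re, w.im) : ℝ × ℝ)) (𝓝[≠] z)
      (𝓝[HH \ {p}] p) := by
    apply tendsto_nhdsWithin_of_tendsto_nhds_of_eventually_within
    · have hc : Continuous fun w : ℂ => ((Real.exp w.re, w.im) : ℝ × ℝ) :=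
        (Real.continuous_exp.comp Complex.continuous_re).prodMk Complex.continuous_im
      exact (hc.tendsto z).mono_left nhdsWithin_le_nhds
    · filter_upwards [self_mem_nhdsWithin] with w hw
      refine ⟨Real.exp_pos _, fun hmem => hw ?_⟩
      simp only [Set.mem_singleton_iff, hpdef, Prod.mk.injEq] at hmem
      exact Complex.ext (Real.exp_injective hmem.1) hmem.2
  have h1 : Tendsto (fun w : ℂ =>
      (f (Real.exp w.re, w.im) - f p) / (Complex.exp w - Complex.exp z)) (𝓝[≠] z) (𝓝 L) := by
    have := hL.comp hT
    refine this.congr fun w => ?_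
    simp only [Function.comp]
    rw [key]
    have : ((p.1 : ℂ)) * Complex.exp (Complex.I * p.2) = Complex.exp z := key z
    rw [this]
  have h2 : Tendsto (fun w : ℂ => (Complex.exp w - Complex.exp z) / (w - z)) (𝓝[≠] z)
      (𝓝 (Complex.exp z)) := by
    have h := hasDerivAt_iff_tendsto_slope.mp (Complex.hasDerivAt_exp z)
    refine h.congr fun w => ?_
    simp [slope_def_field]
  have hd : HasDerivAt (fun w : ℂ => f (Real.exp w.re, w.im)) (L * Complex.exp z) z := by
    rw [hasDerivAt_iff_tendsto_slope]
    refine (h1.mul h2).congr' ?_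
    have hball : Metric.ball z (2 * Real.pi) ∈ 𝓝[≠] z :=
      nhdsWithin_le_nhds (Metric.ball_mem_nhds z (by positivity))
    filter_upwards [self_mem_nhdsWithin, hball] with w hw hb
    have hwz : w - z ≠ 0 := sub_ne_zero.mpr hw
    have hexp : Complex.exp w - Complex.exp z ≠ 0 := by
      rw [sub_ne_zero]
      intro hEq
      obtain ⟨n, hn⟩ := Complex.exp_eq_exp_iff_exists_int.mp hEq
      have hd' : dist w z < 2 * Real.pi := Metric.mem_ball.mp hb
      rw [Complex.dist_eq, hn, add_sub_cancel_left] at hd'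
      have : ‖(n : ℂ) * (2 * Real.pi * Complex.I)‖ = |(n : ℝ)| * (2 * Real.pi) := by
        simp only [norm_mul, Complex.norm_intCast, Complex.norm_real, Complex.norm_I,
          Complex.norm_two, Real.norm_eq_abs, _root_.abs_of_nonneg Real.pi_nonneg]
        ring
      rw [this] at hd'
      have hn0 : n ≠ 0 := by
        rintro rfl
        simp at hn
        exact hw (by simp [hn])
      have : (1 : ℝ) ≤ |(n : ℝ)| := by exact_mod_cast Int.one_le_abs hn0
      nlinarith [Real.pi_pos]
    rw [slope_def_field]
    field_simp
    rfl
  exact hd.differentiableAt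
end

section
/- Let f ∈ 𝓑^p_{c,T} with 1 ≤ p < ∞. Then lim_{r→0⁺} r^c f(r,θ) = 0 and lim_{r→∞} r^c f(r,θ) = 0, uniformly in θ on every compact subinterval of ℝ. -/
open MeasureTheory Complex Filter Topology Set

section Aux

open Complex.HadamardThreeLines

lemma norm_cos_sq (w : ℂ) :
    ‖Complex.cos w‖ ^ 2 = Real.cos w.re ^ 2 + Real.sinh w.im ^ 2 := by
  have h : Complex.cos w = (Real.cos w.re * Real.cosh w.im : ℝ) -
      (Real.sin w.re * Real.sinh w.im : ℝ) * Complex.I := by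
    rw [Complex.cos_eq]; push_cast; ring
  rw [Complex.sq_norm, h, Complex.normSq_apply]
  simp only [Complex.sub_re, Complex.sub_im, Complex.ofReal_re, Complex.ofReal_im,
    Complex.mul_re, Complex.mul_im, Complex.I_re, Complex.I_im]
  have c1 := Real.sin_sq_add_cos_sq w.re
  have c2 := Real.cosh_sq w.im
  nlinarith [Real.sinh_sq w.im]

lemma strip_small (h : ℂ → ℂ) (hd : Differentiable ℂ h) (t M : ℝ) (ht : t ≠ 0) (hM : 1 ≤ M)
    (hb : ∀ z : ℂ, |z.im| ≤ |t| → ‖h z‖ ≤ M)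
    (h0 : Tendsto (fun x : ℝ => h ↑x) atTop (𝓝 0)) (ε : ℝ) (hε : 0 < ε) :
    ∀ᶠ a : ℝ in atTop, ∀ u : ℝ, u ∈ Icc (0:ℝ) (1/2) →
      ‖h (↑a + ↑t * ↑u * Complex.I)‖ ≤ ε := by
  have hcos1 : 0 < Real.cos 1 := Real.cos_one_pos
  set b : ℝ := M / Real.cos 1 with hbdef
  have hb1 : 1 ≤ b := by
    rw [hbdef, le_div_iff₀ hcos1]
    nlinarith [Real.cos_le_one 1]
  have hbpos : 0 < b := lt_of_lt_of_le one_pos hb1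
  set ε' : ℝ := min (ε^2 / b) 1 with hε'def
  have hε'pos : 0 < ε' := lt_min (by positivity) one_pos
  have hε'le1 : ε' ≤ 1 := min_le_right _ _
  have hε'b : ε' * b ≤ ε^2 := by
    calc ε' * b ≤ (ε^2 / b) * b := by
          apply mul_le_mul_of_nonneg_right (min_le_left _ _) hbpos.le
      _ = ε^2 := by field_simp
  -- eventual smallness on the real axis
  have hXev := (Metric.tendsto_atTop.mp h0 ε' hε'pos)
  obtain ⟨X, hX⟩ := hXev
  have hX' : ∀ x : ℝ, X ≤ x → ‖h ↑x‖ ≤ ε' := by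
    intro x hx
    have := hX x hx
    rw [dist_eq_norm, sub_zero] at this
    exact this.le
  -- eventual largeness of cosh
  have hcosh_ev : ∀ᶠ a : ℝ in atTop, M / Real.cosh (a / (2 * |t|)) ≤ ε' := by
    have htpos : 0 < 2 * |t| := by positivity
    have hdiv : Tendsto (fun a : ℝ => a / (2 * |t|)) atTop atTop :=
      tendsto_id.atTop_div_const htpos
    have hexp : Tendsto (fun a : ℝ => Real.exp (a / (2 * |t|))) atTop atTop :=
      Real.tendsto_exp_atTop.comp hdiv
    filter_upwards [hexp.eventually_ge_atTop (2 * (M / ε'))] with a ha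
    have hch : Real.cosh (a / (2 * |t|)) ≥ M / ε' := by
      rw [Real.cosh_eq]
      have := Real.exp_pos (-(a / (2 * |t|)))
      linarith
    rw [div_le_iff₀ (Real.cosh_pos _)]
    · calc M = (M / ε') * ε' := by field_simp
        _ ≤ Real.cosh (a / (2 * |t|)) * ε' := by
            apply mul_le_mul_of_nonneg_right hch hε'pos.le
        _ = ε' * Real.cosh (a / (2 * |t|)) := by ring
  filter_upwards [hcosh_ev, eventually_ge_atTop (2 * X), eventually_ge_atTop (0:ℝ)]
    with a hacosh haX ha0
  intro u hu
  -- the auxiliary function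
  set Φ : ℂ → ℂ := fun w => h (↑a + ↑t * w * Complex.I) * (Complex.cos w)⁻¹ with hΦdef
  have hIm : ∀ w : ℂ, (↑a + ↑t * w * Complex.I).im = t * w.re := by intro w; simp
  have hRe : ∀ w : ℂ, (↑a + ↑t * w * Complex.I).re = a - t * w.im := by
    intro w; simp; ring
  have hcoslb : ∀ w : ℂ, w.re ∈ Icc (0:ℝ) 1 → Real.cos 1 ≤ ‖Complex.cos w‖ := by
    intro w hw
    have hc : Real.cos 1 ≤ Real.cos w.re :=
      Real.cos_le_cos_of_nonneg_of_le_pi hw.1 (by linarith [Real.pi_gt_three]) hw.2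
    nlinarith [norm_cos_sq w, norm_nonneg (Complex.cos w), sq_nonneg (Real.sinh w.im),
      hcos1]
  have hcosne : ∀ w : ℂ, w.re ∈ Icc (0:ℝ) 1 → Complex.cos w ≠ 0 := by
    intro w hw hc
    have := hcoslb w hw
    rw [hc, norm_zero] at this
    linarith
  have hdiffcl : DifferentiableOn ℂ Φ (verticalClosedStrip 0 1) := by
    intro w hw
    apply DifferentiableAt.differentiableWithinAt
    apply DifferentiableAt.mul
    · exact (hd _).comp w (by fun_prop)
    · exact (Complex.differentiable_cos w).inv (hcosne w hw)
  have hsub1 : verticalStrip 0 1 ⊆ verticalClosedStrip 0 1 := fun w hw =>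
    ⟨hw.1.le, hw.2.le⟩
  have hsubcl : closure (verticalStrip 0 1) ⊆ verticalClosedStrip 0 1 :=
    closure_minimal hsub1 (IsClosed.preimage Complex.continuous_re isClosed_Icc)
  have hDCC : DiffContOnCl ℂ Φ (verticalStrip 0 1) :=
    ⟨hdiffcl.mono hsub1, hdiffcl.continuousOn.mono hsubcl⟩
  have hMb : ∀ w : ℂ, w ∈ verticalClosedStrip 0 1 → ‖Φ w‖ ≤ b := by
    intro w hw
    rw [hΦdef]
    simp only [norm_mul, norm_inv]
    have h1 : ‖h (↑a + ↑t * w * Complex.I)‖ ≤ M := by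
      apply hb
      rw [hIm w, abs_mul]
      calc |t| * |w.re| ≤ |t| * 1 := by
            apply mul_le_mul_of_nonneg_left _ (abs_nonneg t)
            rw [abs_le]; exact ⟨by linarith [hw.1], hw.2⟩
        _ = |t| := mul_one _
    have h2 : (Real.cos 1) ≤ ‖Complex.cos w‖ := hcoslb w hw
    rw [hbdef, div_eq_mul_inv]
    apply mul_le_mul h1 _ (inv_nonneg.mpr (norm_nonneg _)) (by linarith)
    exact inv_anti₀ hcos1 h2
  have hB : BddAbove ((norm ∘ Φ) '' verticalClosedStrip 0 1) := by
    refine ⟨b, ?_⟩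
    rintro v ⟨w, hw, rfl⟩
    exact hMb w hw
  -- edge bounds
  have edge0 : ∀ w : ℂ, w ∈ Complex.re ⁻¹' {0} → ‖Φ w‖ ≤ ε' := by
    intro w hw0
    have hw0' : w.re = 0 := hw0
    have hwiI : w = ↑w.im * Complex.I := by
      apply Complex.ext <;> simp [hw0']
    have hzre : (↑a + ↑t * w * Complex.I) = ((a - t * w.im : ℝ) : ℂ) := by
      apply Complex.ext
      · rw [hRe w]; simp
      · rw [hIm w, hw0']; simp
    have hcosw : ‖Complex.cos w‖ = Real.cosh w.im := by
      rw [show Complex.cos w = Complex.cosh ↑w.im by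
        conv_lhs => rw [hwiI, Complex.cos_mul_I]]
      rw [← Complex.ofReal_cosh, Complex.norm_real, Real.norm_eq_abs,
        _root_.abs_of_nonneg (Real.cosh_pos _).le]
    rw [hΦdef]
    simp only [norm_mul, norm_inv]
    rw [hzre, hcosw]
    by_cases hcase : t * w.im ≤ a / 2
    · have hx : X ≤ a - t * w.im := by linarith
      calc ‖h ↑(a - t * w.im)‖ * (Real.cosh w.im)⁻¹ ≤ ε' * 1 := by
            apply mul_le_mul (hX' _ hx) _ (by positivity) hε'pos.le
            rw [inv_le_one_iff₀]
            right; exact Real.one_le_cosh w.im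
        _ = ε' := mul_one _
    · push_neg at hcase
      have him : a / (2 * |t|) ≤ |w.im| := by
        rw [div_le_iff₀ (by positivity)]
        calc a = 2 * (a/2) := by ring
          _ ≤ 2 * (t * w.im) := by linarith
          _ ≤ 2 * (|t| * |w.im|) := by
              have : t * w.im ≤ |t * w.im| := le_abs_self _
              rw [abs_mul] at this
              linarith
          _ = |w.im| * (2 * |t|) := by ring
      have hch : Real.cosh (a / (2 * |t|)) ≤ Real.cosh w.im := by
        rw [Real.cosh_le_cosh]
        rw [_root_.abs_of_nonneg (by positivity : (0:ℝ) ≤ a / (2 * |t|))]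
        exact him
      have hhM : ‖h ↑(a - t * w.im)‖ ≤ M := by
        apply hb; simp [abs_nonneg]
      calc ‖h ↑(a - t * w.im)‖ * (Real.cosh w.im)⁻¹
          ≤ M * (Real.cosh (a / (2 * |t|)))⁻¹ := by
            apply mul_le_mul hhM _ (by positivity) (by linarith)
            exact inv_anti₀ (Real.cosh_pos _) hch
        _ = M / Real.cosh (a / (2 * |t|)) := (div_eq_mul_inv M _).symm
        _ ≤ ε' := hacosh
  have edge1 : ∀ w : ℂ, w ∈ Complex.re ⁻¹' {1} → ‖Φ w‖ ≤ b := by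
    intro w hw1
    exact hMb w ⟨by rw [mem_preimage, mem_singleton_iff] at hw1; rw [hw1]; norm_num,
      by rw [mem_preimage, mem_singleton_iff] at hw1; rw [hw1]⟩
  -- apply Hadamard
  have hmem : (↑u : ℂ) ∈ verticalClosedStrip 0 1 := by
    simp only [verticalClosedStrip, mem_preimage, Complex.ofReal_re]
    exact ⟨hu.1, by linarith [hu.2]⟩
  have had := Complex.HadamardThreeLines.norm_le_interp_of_mem_verticalClosedStrip'
    (f := Φ) zero_lt_one hmem hDCC hB edge0 edge1
  simp only [Complex.ofReal_re, sub_zero, div_one] at had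
  -- chain of inequalities
  have hchain : ε' ^ (1 - u) * b ^ u ≤ ε := by
    have h1 : ε' ^ (1 - u) ≤ ε' ^ ((1:ℝ)/2) :=
      Real.rpow_le_rpow_of_exponent_ge hε'pos hε'le1 (by linarith [hu.2])
    have h2 : b ^ u ≤ b ^ ((1:ℝ)/2) :=
      Real.rpow_le_rpow_of_exponent_le hb1 (by linarith [hu.2])
    have h3 : ε' ^ ((1:ℝ)/2) * b ^ ((1:ℝ)/2) = (ε' * b) ^ ((1:ℝ)/2) :=
      (Real.mul_rpow hε'pos.le hbpos.le).symm
    have h4 : (ε' * b) ^ ((1:ℝ)/2) ≤ (ε^2) ^ ((1:ℝ)/2) :=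
      Real.rpow_le_rpow (by positivity) hε'b (by norm_num)
    have h5 : ((ε^2 : ℝ)) ^ ((1:ℝ)/2) = ε := by
      rw [← Real.rpow_natCast ε 2, ← Real.rpow_mul hε.le]
      norm_num
    calc ε' ^ (1 - u) * b ^ u ≤ ε' ^ ((1:ℝ)/2) * b ^ ((1:ℝ)/2) := by
          apply mul_le_mul h1 h2 (Real.rpow_nonneg hbpos.le _)
            (Real.rpow_nonneg hε'pos.le _)
      _ = (ε' * b) ^ ((1:ℝ)/2) := h3
      _ ≤ (ε^2) ^ ((1:ℝ)/2) := h4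
      _ = ε := h5
  -- recover h from Φ
  have hcosu : Complex.cos ↑u ≠ 0 := hcosne ↑u (by
    rw [Complex.ofReal_re]; exact ⟨hu.1, by linarith [hu.2]⟩)
  have hrecov : h (↑a + ↑t * ↑u * Complex.I) = Φ ↑u * Complex.cos ↑u := by
    rw [hΦdef]
    field_simp
  rw [hrecov, norm_mul]
  calc ‖Φ ↑u‖ * ‖Complex.cos ↑u‖ ≤ ε * 1 := by
        apply mul_le_mul (had.trans hchain) _ (norm_nonneg _) hε.le
        rw [← Complex.ofReal_cos, Complex.norm_real, Real.norm_eq_abs]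
        exact Real.abs_cos_le_one u
    _ = ε := mul_one _

lemma vanish_atTop (h : ℂ → ℂ) (hd : Differentiable ℂ h) (M p : ℝ) (hp : 1 ≤ p) (hM : 0 ≤ M)
    (hb : ∀ z : ℂ, |z.im| ≤ 1 → ‖h z‖ ≤ M)
    (hInt : Integrable (fun x : ℝ => ‖h ↑x‖ ^ p)) :
    Tendsto (fun x : ℝ => h ↑x) atTop (𝓝 0) := by
  -- derivative bound on the real line
  have hderiv : ∀ x : ℝ, ‖deriv h ↑x‖ ≤ M := by
    intro x
    have := Complex.norm_deriv_le_of_forall_mem_sphere_norm_le one_pos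
      (hd.diffContOnCl) (C := M) (fun z hz => by
        apply hb
        have : ‖z - ↑x‖ = 1 := by simpa [Complex.dist_eq] using hz
        have him : |(z - ↑x).im| ≤ 1 := this ▸ Complex.abs_im_le_norm _
        simpa using him)
    simpa using this
  -- Lipschitz on the real line
  have hLip : ∀ x y : ℝ, ‖h ↑y - h ↑x‖ ≤ M * |y - x| := by
    intro x y
    have := Convex.norm_image_sub_le_of_norm_deriv_le
      (f := fun t : ℝ => h ↑t) (s := univ) (C := M)
      (fun t _ => ((hd ↑t).hasDerivAt.comp_ofReal).differentiableAt)
      (fun t _ => by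
        rw [((hd ↑t).hasDerivAt.comp_ofReal).deriv]
        exact hderiv t)
      convex_univ (mem_univ x) (mem_univ y)
    simpa [Real.norm_eq_abs] using this
  -- tail integrals tend to 0
  have hnonneg : ∀ x : ℝ, 0 ≤ ‖h ↑x‖ ^ p := fun x => Real.rpow_nonneg (norm_nonneg _) _
  have tail : Tendsto (fun X : ℝ => ∫ x in Ioi X, ‖h ↑x‖ ^ p) atTop (𝓝 0) := by
    have h1 : Tendsto (fun X : ℝ => ∫ x in (0:ℝ)..X, ‖h ↑x‖ ^ p) atTop
        (𝓝 (∫ x in Ioi (0:ℝ), ‖h ↑x‖ ^ p)) :=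
      intervalIntegral_tendsto_integral_Ioi 0 hInt.integrableOn tendsto_id
    have h2 : Tendsto (fun X : ℝ => (∫ x in Ioi (0:ℝ), ‖h ↑x‖ ^ p) -
        ∫ x in (0:ℝ)..X, ‖h ↑x‖ ^ p) atTop (𝓝 0) := by
      simpa using (tendsto_const_nhds (x := ∫ x in Ioi (0:ℝ), ‖h ↑x‖ ^ p)).sub h1
    refine h2.congr' ?_
    filter_upwards [eventually_ge_atTop (0:ℝ)] with X hX
    rw [intervalIntegral.integral_of_le hX]
    have hsplit : ∫ x in Ioi (0:ℝ), ‖h ↑x‖ ^ p =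
        (∫ x in Ioc (0:ℝ) X, ‖h ↑x‖ ^ p) + ∫ x in Ioi X, ‖h ↑x‖ ^ p := by
      rw [← Set.Ioc_union_Ioi_eq_Ioi hX]
      exact setIntegral_union (Set.Ioc_disjoint_Ioi le_rfl) measurableSet_Ioi
        hInt.integrableOn hInt.integrableOn
    rw [hsplit]; ring
  -- main argument
  rw [Metric.tendsto_atTop]
  intro ε hε
  set δ : ℝ := min (1/2) (ε / (2 * (M + 1))) with hδ
  have hδpos : 0 < δ := by
    apply lt_min (by norm_num)
    positivity
  have hδle : M * δ ≤ ε / 2 := by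
    have h1 : δ ≤ ε / (2 * (M + 1)) := min_le_right _ _
    have : M * δ ≤ M * (ε / (2 * (M + 1))) := by
      apply mul_le_mul_of_nonneg_left h1 hM
    calc M * δ ≤ M * (ε / (2 * (M + 1))) := this
      _ = (M * ε) / (2 * (M + 1)) := (mul_div_assoc _ _ _).symm
      _ ≤ ε / 2 := by
          rw [div_le_div_iff₀ (by positivity) (by norm_num)]
          nlinarith
  have hkey : 0 < δ * (ε/2) ^ p := by positivity
  obtain ⟨X, hX⟩ := (Metric.tendsto_atTop.mp tail (δ * (ε/2)^p) hkey) -- ∀ n ≥ X, dist .. < ..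
  refine ⟨X + 1, fun x₀ hx₀ => ?_⟩
  rw [dist_eq_norm, sub_zero]
  by_contra hcon
  push_neg at hcon
  -- ‖h x₀‖ ≥ ε on Icc (x₀ - δ) x₀ the function is ≥ ε/2
  have hlow : ∀ x ∈ Icc (x₀ - δ) x₀, (ε/2) ^ p ≤ ‖h ↑x‖ ^ p := by
    intro x hx
    apply Real.rpow_le_rpow (by positivity) _ (by linarith)
    have h1 : ‖h ↑x₀ - h ↑x‖ ≤ M * |x₀ - x| := hLip x x₀
    have h2 : |x₀ - x| ≤ δ := by
      rw [_root_.abs_of_nonneg (by linarith [hx.2])]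
      linarith [hx.1]
    have : ‖h ↑x₀‖ - ‖h ↑x‖ ≤ M * δ := by
      calc ‖h ↑x₀‖ - ‖h ↑x‖ ≤ ‖h ↑x₀ - h ↑x‖ := norm_sub_norm_le _ _
        _ ≤ M * |x₀ - x| := h1
        _ ≤ M * δ := mul_le_mul_of_nonneg_left h2 hM
    linarith
  have hsub : Icc (x₀ - δ) x₀ ⊆ Ioi X := by
    intro x hx
    have : δ ≤ 1/2 := min_le_left _ _
    simp only [mem_Ioi]
    have := hx.1
    linarith
  have hge : δ * (ε/2)^p ≤ ∫ x in Ioi X, ‖h ↑x‖ ^ p := by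
    have hIcc : ∫ x in Icc (x₀ - δ) x₀, (ε/2)^p ≤ ∫ x in Icc (x₀ - δ) x₀, ‖h ↑x‖ ^ p := by
      apply setIntegral_mono_on (integrableOn_const (by simp))
        hInt.integrableOn measurableSet_Icc hlow
    have hconst : ∫ x in Icc (x₀ - δ) x₀, (ε/2)^p = δ * (ε/2)^p := by
      rw [setIntegral_const]
      rw [Real.volume_real_Icc_of_le (by linarith)]
      rw [smul_eq_mul]
      ring
    have hmono : ∫ x in Icc (x₀ - δ) x₀, ‖h ↑x‖ ^ p ≤ ∫ x in Ioi X, ‖h ↑x‖ ^ p := by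
      apply setIntegral_mono_set hInt.integrableOn
      · exact Filter.Eventually.of_forall hnonneg
      · exact Filter.Eventually.of_forall hsub
    linarith [hIcc, hconst ▸ hIcc]
  have := hX X le_rfl
  have h2 := hX (X) le_rfl
  have h3 : dist (∫ x in Ioi X, ‖h ↑x‖ ^ p) 0 < δ * (ε/2)^p := hX X le_rfl
  rw [dist_eq_norm, sub_zero, Real.norm_eq_abs] at h3
  have h4 : ∫ x in Ioi X, ‖h ↑x‖ ^ p < δ * (ε/2)^p := lt_of_abs_lt h3
  linarith

lemma polar_entire (f : ℝ × ℝ → ℂ) (hpa : PolarAnalyticOn f HH) :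
    Differentiable ℂ (fun z : ℂ => f (Real.exp z.re, z.im)) := by
  intro z
  set p : ℝ × ℝ := (Real.exp z.re, z.im) with hp
  obtain ⟨L, hL⟩ := hpa p (Real.exp_pos _)
  set m : ℂ → ℝ × ℝ := fun w => (Real.exp w.re, w.im) with hm
  have hmz : m z = p := rfl
  -- m tends into the within filter
  have T1 : Tendsto m (𝓝[≠] z) (𝓝[HH \ {p}] p) := by
    rw [tendsto_nhdsWithin_iff]
    constructor
    · exact ((Real.continuous_exp.comp Complex.continuous_re).prodMk
        Complex.continuous_im).continuousAt.tendsto.mono_left nhdsWithin_le_nhds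
    · filter_upwards [self_mem_nhdsWithin] with w hw
      refine ⟨Real.exp_pos _, ?_⟩
      simp only [mem_singleton_iff]
      intro hcon
      apply hw
      have h1 : Real.exp w.re = Real.exp z.re := congrArg Prod.fst hcon
      have h2 : w.im = z.im := congrArg Prod.snd hcon
      exact Complex.ext (Real.exp_injective h1) h2
  have T2 : Tendsto (fun w => (f (m w) - f p) /
      (((m w).1 : ℂ) * Complex.exp (Complex.I * (m w).2) -
        ((p.1 : ℂ) * Complex.exp (Complex.I * p.2)))) (𝓝[≠] z) (𝓝 L) := hL.comp T1
  have T3 : Tendsto (slope Complex.exp z) (𝓝[≠] z) (𝓝 (Complex.exp z)) :=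
    hasDerivAt_iff_tendsto_slope.mp (Complex.hasDerivAt_exp z)
  have key : ∀ w : ℂ, ((m w).1 : ℂ) * Complex.exp (Complex.I * (m w).2) = Complex.exp w := by
    intro w
    rw [hm]
    simp only
    conv_rhs => rw [← Complex.re_add_im w]
    rw [Complex.exp_add, ← Complex.ofReal_exp, mul_comm Complex.I]
  -- eventual equality of slopes
  have ev : ∀ᶠ w in 𝓝[≠] z, (f (m w) - f p) /
      (((m w).1 : ℂ) * Complex.exp (Complex.I * (m w).2) -
        ((p.1 : ℂ) * Complex.exp (Complex.I * p.2))) * slope Complex.exp z w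
      = slope (fun z : ℂ => f (Real.exp z.re, z.im)) z w := by
    filter_upwards [self_mem_nhdsWithin,
      inter_mem_nhdsWithin _ (Metric.ball_mem_nhds z one_pos)] with w hw hball
    have hwz : w ≠ z := hw
    have hne : Complex.exp w - Complex.exp z ≠ 0 := by
      rw [sub_ne_zero]
      intro hcon
      obtain ⟨n, hn⟩ := Complex.exp_eq_exp_iff_exists_int.mp hcon
      have : w - z = n * (2 * Real.pi * Complex.I) := by rw [hn]; ring
      have habs : ‖w - z‖ < 1 := by
        simpa [Complex.dist_eq] using hball.2
      rw [this] at habs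
      have h2 : (n : ℝ) = 0 := by
        by_contra hn0
        have : (1:ℝ) ≤ |(n:ℝ)| := by
          rcases Int.one_le_abs (by exact_mod_cast hn0) with h
          exact_mod_cast h
        have hpi : (1:ℝ) ≤ |(n:ℝ)| * (2 * Real.pi) := by
          nlinarith [Real.pi_gt_three]
        simp only [norm_mul, Complex.norm_intCast, Complex.norm_two, Complex.norm_real,
          Real.norm_eq_abs, Complex.norm_I, mul_one] at habs
        rw [_root_.abs_of_nonneg Real.pi_pos.le] at habs
        nlinarith
      have hn0 : (n:ℂ) = 0 := by exact_mod_cast h2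
      exact hwz (by rw [hn, hn0]; ring)
    have hK : ((m w).1 : ℂ) * Complex.exp (Complex.I * (m w).2) -
        ((p.1 : ℂ) * Complex.exp (Complex.I * p.2)) = Complex.exp w - Complex.exp z := by
      rw [key w]
      congr 1
      rw [show (p.1 : ℂ) * Complex.exp (Complex.I * p.2) = Complex.exp z from key z]
    rw [hK, slope_def_field, slope_def_field]
    have hgz : f (m w) = (fun z : ℂ => f (Real.exp z.re, z.im)) w := rfl
    rw [div_mul_div_comm, mul_comm (f (m w) - f p), mul_div_mul_left _ _ hne]
  have : Tendsto (slope (fun z : ℂ => f (Real.exp z.re, z.im)) z) (𝓝[≠] z)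
      (𝓝 (L * Complex.exp z)) := Tendsto.congr' ev (T2.mul T3)
  exact (hasDerivAt_iff_tendsto_slope.mpr this).differentiableAt

end Aux

/-- for `f ∈ 𝓑^p_{c,T}` with `1 ≤ p < ∞`, `r^c f(r,θ) → 0` as `r → 0⁺` and
as `r → ∞`, uniformly in `θ` on every compact interval. -/
theorem bernstein_uniform_limits
    (c T p : ℝ) (hp : 1 ≤ p) (hT : 0 < T)
    (f : ℝ × ℝ → ℂ) (hf : MemBernstein c T p f) :
    ∀ A B : ℝ, A ≤ B →
      TendstoUniformlyOn (fun (r : ℝ) (θ : ℝ) => (r ^ c : ℝ) • f (r, θ)) 0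
          (nhdsWithin 0 (Set.Ioi 0)) (Set.Icc A B) ∧
      TendstoUniformlyOn (fun (r : ℝ) (θ : ℝ) => (r ^ c : ℝ) • f (r, θ)) 0
          Filter.atTop (Set.Icc A B) := by
  obtain ⟨hpa, ⟨hmeas, hint⟩, C, hCpos, hCb⟩ := hf
  intro A B hAB
  set g : ℂ → ℂ := fun z => f (Real.exp z.re, z.im) with hgdef
  have hg : Differentiable ℂ g := polar_entire f hpa
  set h : ℂ → ℂ := fun z => Complex.exp ((c : ℂ) * z) * g z with hhdef
  have hh : Differentiable ℂ h := ((differentiable_id.const_mul _).cexp).mul hg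
  -- norm identity
  have hnorm : ∀ z : ℂ, ‖h z‖ = Real.exp (c * z.re) * ‖f (Real.exp z.re, z.im)‖ := by
    intro z
    rw [hhdef]
    simp only [norm_mul, Complex.norm_exp]
    congr 2
    simp [Complex.mul_re]
  -- global bound on strips
  have hbound : ∀ z : ℂ, ‖h z‖ ≤ C * Real.exp (T * |z.im|) := by
    intro z
    rw [hnorm z]
    have hfb := hCb (Real.exp z.re) z.im (Real.exp_pos _)
    have hrp : (Real.exp z.re) ^ (-c) = Real.exp (-(c * z.re)) := by
      rw [← Real.exp_mul]; ring_nf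
    calc Real.exp (c * z.re) * ‖f (Real.exp z.re, z.im)‖
        ≤ Real.exp (c * z.re) * (C * (Real.exp z.re) ^ (-c) * Real.exp (T * |z.im|)) := by
          apply mul_le_mul_of_nonneg_left hfb (Real.exp_pos _).le
      _ = C * Real.exp (T * |z.im|) := by
          rw [hrp]
          have hone : Real.exp (c * z.re) * Real.exp (-(c * z.re)) = 1 := by
            rw [← Real.exp_add]; simp
          calc Real.exp (c * z.re) * (C * Real.exp (-(c * z.re)) * Real.exp (T * |z.im|))
              = (Real.exp (c * z.re) * Real.exp (-(c * z.re))) *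
                (C * Real.exp (T * |z.im|)) := by ring
            _ = C * Real.exp (T * |z.im|) := by rw [hone]; ring
  -- integrability on the real line
  have hInt : Integrable (fun x : ℝ => ‖h (x : ℂ)‖ ^ p) := by
    have hiff := MeasureTheory.integrableOn_image_iff_integrableOn_abs_deriv_smul
      (MeasurableSet.univ) (fun x _ => (Real.hasDerivAt_exp x).hasDerivWithinAt)
      (Real.exp_injective.injOn) (fun r => ‖f (r, 0)‖ ^ p * r ^ (c * p - 1))
    rw [Set.image_univ, Real.range_exp] at hiff
    have h2 := hiff.mp hint
    rw [integrableOn_univ] at h2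
    refine h2.congr (Filter.Eventually.of_forall fun x => ?_)
    have hre : ((x : ℂ)).re = x := Complex.ofReal_re x
    have him : ((x : ℂ)).im = 0 := Complex.ofReal_im x
    have hN : ‖h (x : ℂ)‖ = Real.exp (c * x) * ‖f (Real.exp x, 0)‖ := by
      rw [hnorm, hre, him]
    simp only [smul_eq_mul]
    rw [Real.abs_exp]
    rw [show (Real.exp x) ^ (c * p - 1) = Real.exp (x * (c * p - 1)) from
      (Real.exp_mul x _).symm]
    rw [hN, Real.mul_rpow (Real.exp_pos _).le (norm_nonneg _)]
    rw [← Real.exp_mul]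
    rw [show Real.exp x * (‖f (Real.exp x, 0)‖ ^ p * Real.exp (x * (c * p - 1)))
      = (Real.exp x * Real.exp (x * (c * p - 1))) * ‖f (Real.exp x, 0)‖ ^ p by ring]
    rw [← Real.exp_add]
    rw [show x + x * (c * p - 1) = c * x * p by ring]
  -- vanishing on the real line
  set M₁ : ℝ := C * Real.exp T with hM₁def
  have hM₁ : 0 ≤ M₁ := by positivity
  have hb1 : ∀ z : ℂ, |z.im| ≤ 1 → ‖h z‖ ≤ M₁ := by
    intro z hz
    refine (hbound z).trans ?_
    rw [hM₁def]
    apply mul_le_mul_of_nonneg_left _ hCpos.le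
    apply Real.exp_le_exp.mpr
    calc T * |z.im| ≤ T * 1 := mul_le_mul_of_nonneg_left hz hT.le
      _ = T := mul_one T
  have h0top : Tendsto (fun x : ℝ => h (x : ℂ)) atTop (𝓝 0) :=
    vanish_atTop h hh M₁ p hp hM₁ hb1 hInt
  set h2 : ℂ → ℂ := fun z => h (-z) with hh2def
  have hh2 : Differentiable ℂ h2 := hh.comp differentiable_id.neg
  have hInt2 : Integrable (fun x : ℝ => ‖h2 (x : ℂ)‖ ^ p) := by
    refine hInt.comp_neg.congr (Filter.Eventually.of_forall fun x => ?_)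
    rw [hh2def]
    simp only [Complex.ofReal_neg]
  have hb2 : ∀ z : ℂ, |z.im| ≤ 1 → ‖h2 z‖ ≤ M₁ := by
    intro z hz
    apply hb1 (-z)
    simpa using hz
  have h0bot : Tendsto (fun x : ℝ => h2 (x : ℂ)) atTop (𝓝 0) :=
    vanish_atTop h2 hh2 M₁ p hp hM₁ hb2 hInt2
  -- strip parameters
  set K : ℝ := 1 + max |A| |B| with hKdef
  have hK0 : 0 < K := by positivity
  have hθK : ∀ θ : ℝ, θ ∈ Icc A B → |θ| ≤ K := by
    intro θ hθ
    rw [abs_le]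
    constructor
    · have h1 := neg_abs_le A
      have h2 := le_max_left |A| |B|
      have := hθ.1
      rw [hKdef]
      linarith
    · have h1 := le_abs_self B
      have h2 := le_max_right |A| |B|
      have := hθ.2
      rw [hKdef]
      linarith
  set M₂ : ℝ := max 1 (C * Real.exp (T * (2 * K))) with hM₂def
  have hM₂ : 1 ≤ M₂ := le_max_left _ _
  have hbs : ∀ z : ℂ, |z.im| ≤ 2 * K → ‖h z‖ ≤ M₂ := by
    intro z hz
    refine (hbound z).trans (le_trans ?_ (le_max_right _ _))
    apply mul_le_mul_of_nonneg_left _ hCpos.le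
    exact Real.exp_le_exp.mpr (mul_le_mul_of_nonneg_left hz hT.le)
  have hbs2 : ∀ z : ℂ, |z.im| ≤ 2 * K → ‖h2 z‖ ≤ M₂ := by
    intro z hz
    apply hbs (-z)
    simpa using hz
  -- uniform smallness on strips
  have evGen : ∀ F : ℂ → ℂ, Differentiable ℂ F →
      (∀ z : ℂ, |z.im| ≤ 2 * K → ‖F z‖ ≤ M₂) →
      Tendsto (fun x : ℝ => F (x : ℂ)) atTop (𝓝 0) →
      ∀ ε : ℝ, 0 < ε → ∀ᶠ a : ℝ in atTop, ∀ y : ℝ, |y| ≤ K →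
        ‖F (↑a + ↑y * Complex.I)‖ ≤ ε := by
    intro F hFd hFb hF0 ε hε
    have habs2K : |(2 * K : ℝ)| = 2 * K := abs_of_pos (by positivity)
    have e1 := strip_small F hFd (2 * K) M₂ (by positivity) hM₂
      (fun z hz => hFb z (by rwa [habs2K] at hz)) hF0 ε hε
    have e2 := strip_small F hFd (-(2 * K)) M₂ (by simp; positivity) hM₂
      (fun z hz => hFb z (by rwa [abs_neg, habs2K] at hz)) hF0 ε hε
    filter_upwards [e1, e2] with a ha1 ha2
    intro y hy
    rcases le_or_gt 0 y with hy0 | hy0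
    · have hu : y / (2 * K) ∈ Icc (0:ℝ) (1/2) := by
        constructor
        · positivity
        · rw [div_le_iff₀ (by positivity)]
          have := (abs_le.mp hy).2
          linarith
      have hres := ha1 (y / (2 * K)) hu
      have harg : ((2 * K : ℝ) : ℂ) * ↑(y / (2 * K)) * Complex.I = ↑y * Complex.I := by
        have hq : (2 * K) * (y / (2 * K)) = y := by field_simp
        rw [show ((2 * K : ℝ) : ℂ) * ↑(y / (2 * K)) = ↑((2 * K) * (y / (2 * K))) by
          push_cast; ring, hq]
      rwa [harg] at hres
    · have hu : -y / (2 * K) ∈ Icc (0:ℝ) (1/2) := by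
        constructor
        · have : 0 ≤ -y := by linarith
          positivity
        · rw [div_le_iff₀ (by positivity)]
          have := (abs_le.mp hy).1
          linarith
      have hres := ha2 (-y / (2 * K)) hu
      have harg : ((-(2 * K) : ℝ) : ℂ) * ↑(-y / (2 * K)) * Complex.I = ↑y * Complex.I := by
        have hq : (-(2 * K)) * (-y / (2 * K)) = y := by field_simp
        rw [show ((-(2 * K) : ℝ) : ℂ) * ↑(-y / (2 * K)) = ↑((-(2 * K)) * (-y / (2 * K))) by
          push_cast; ring, hq]
      rwa [harg] at hres
  -- identity between h and r^c f(r,θ)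
  have hident : ∀ r θ : ℝ, 0 < r →
      (r ^ c : ℝ) * ‖f (r, θ)‖ = ‖h (↑(Real.log r) + ↑θ * Complex.I)‖ := by
    intro r θ hr
    rw [hnorm]
    have hre : ((↑(Real.log r) + ↑θ * Complex.I : ℂ)).re = Real.log r := by simp
    have him : ((↑(Real.log r) + ↑θ * Complex.I : ℂ)).im = θ := by simp
    rw [hre, him, Real.exp_log hr]
    congr 1
    rw [Real.rpow_def_of_pos hr, mul_comm]
  constructor
  · -- r → 0⁺
    rw [Metric.tendstoUniformlyOn_iff]
    intro ε hε
    obtain ⟨A₀, hA₀⟩ := eventually_atTop.mp (evGen h2 hh2 hbs2 h0bot (ε/2) (by positivity))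
    have hδpos : (0:ℝ) < min 1 (Real.exp (-A₀)) := lt_min one_pos (Real.exp_pos _)
    have hmem : Ioo (0:ℝ) (min 1 (Real.exp (-A₀))) ∈ 𝓝[>] (0:ℝ) :=
      Ioo_mem_nhdsGT_of_mem ⟨le_refl 0, hδpos⟩
    filter_upwards [hmem] with r hr
    intro θ hθ
    have hr0 : 0 < r := hr.1
    have hlog : Real.log r ≤ -A₀ := by
      have hle : r ≤ Real.exp (-A₀) := (lt_of_lt_of_le hr.2 (min_le_right _ _)).le
      calc Real.log r ≤ Real.log (Real.exp (-A₀)) := Real.log_le_log hr0 hle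
        _ = -A₀ := Real.log_exp _
    have ha : A₀ ≤ -(Real.log r) := by linarith
    have hval := hA₀ (-(Real.log r)) ha (-θ) (by rw [abs_neg]; exact hθK θ hθ)
    have harg : ((↑(-(Real.log r)) : ℂ) + ↑(-θ) * Complex.I) =
        -(↑(Real.log r) + ↑θ * Complex.I) := by push_cast; ring
    rw [hh2def] at hval
    simp only at hval
    rw [harg, neg_neg] at hval
    rw [Pi.zero_apply, dist_zero_left, norm_smul, Real.norm_eq_abs,
      _root_.abs_of_pos (Real.rpow_pos_of_pos hr0 c), hident r θ hr0]
    calc ‖h (↑(Real.log r) + ↑θ * Complex.I)‖ ≤ ε/2 := hval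
      _ < ε := by linarith
  · -- r → ∞
    rw [Metric.tendstoUniformlyOn_iff]
    intro ε hε
    obtain ⟨A₀, hA₀⟩ := eventually_atTop.mp (evGen h hh hbs h0top (ε/2) (by positivity))
    filter_upwards [eventually_ge_atTop (max 1 (Real.exp A₀))] with r hr
    intro θ hθ
    have hr0 : 0 < r := lt_of_lt_of_le one_pos ((le_max_left _ _).trans hr)
    have hlog : A₀ ≤ Real.log r := by
      calc A₀ = Real.log (Real.exp A₀) := (Real.log_exp _).symm
        _ ≤ Real.log r := Real.log_le_log (Real.exp_pos _) ((le_max_right _ _).trans hr)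
    have hval := hA₀ (Real.log r) hlog θ (hθK θ hθ)
    rw [Pi.zero_apply, dist_zero_left, norm_smul, Real.norm_eq_abs,
      _root_.abs_of_pos (Real.rpow_pos_of_pos hr0 c), hident r θ hr0]
    calc ‖h (↑(Real.log r) + ↑θ * Complex.I)‖ ≤ ε/2 := hval
      _ < ε := by linarith
end

section
/- If f ∈ X_c (i.e., f(·)(·)^{c−1} ∈ L¹(ℝ⁺)) and its Mellin transform M_c[f](c+i·) belongs to L¹(ℝ), then f ∈ X²_c. -/
open MeasureTheory Complex Filter Topology Set

namespace MellinL1X2Aux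

open Real MeasureTheory Complex Set
open scoped FourierTransform Convolution

theorem rexp_neg_deriv_aux :
    ∀ x ∈ (univ : Set ℝ), HasDerivWithinAt (rexp ∘ Neg.neg) (-rexp (-x)) univ x :=
  fun x _ ↦ mul_neg_one (rexp (-x)) ▸
    ((Real.hasDerivAt_exp (-x)).comp x (hasDerivAt_neg x)).hasDerivWithinAt

theorem rexp_neg_image_aux : rexp ∘ Neg.neg '' univ = Ioi 0 := by
  rw [Set.image_comp, Set.image_univ_of_surjective neg_surjective, Set.image_univ, Real.range_exp]

theorem rexp_neg_injOn_aux : univ.InjOn (rexp ∘ Neg.neg) :=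
  Real.exp_injective.injOn.comp neg_injective.injOn (univ.mapsTo_univ _)

theorem rexp_cexp_aux (x : ℝ) (s : ℂ) (f : ℂ) :
    rexp (-x) • cexp (-↑x) ^ (s - 1) • f = cexp (-s * ↑x) • f := by
  rw [Complex.real_smul, Complex.ofReal_exp, smul_eq_mul, smul_eq_mul,
    Complex.cpow_def_of_ne_zero (Complex.exp_ne_zero _),
    Complex.log_exp (by simp [Real.pi_pos]) (by simp [Real.pi_nonneg]),
    ← mul_assoc, ← Complex.exp_add]
  push_cast
  ring_nf

set_option maxHeartbeats 1000000 in
/-- Convolution with a normalized bump is bounded by the `L¹`-norm of the Fourier transform. -/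
theorem conv_norm_le {g : ℝ → ℂ} (hg : Integrable g) (hFg : Integrable (𝓕 g))
    (φ : ContDiffBump (0 : ℝ)) (x : ℝ) :
    ‖(φ.normed volume ⋆[ContinuousLinearMap.lsmul ℝ ℝ, volume] g) x‖ ≤ ∫ t, ‖𝓕 g t‖ := by
  set k : ℝ → ℝ := φ.normed volume with hk_def
  have hk : Integrable k := φ.integrable_normed
  set h : ℝ → ℂ := fun x => ∫ t, k t • g (x - t) with hh_def
  have hconv : (φ.normed volume ⋆[ContinuousLinearMap.lsmul ℝ ℝ, volume] g) = h := by
    funext y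
    simp only [convolution, ContinuousLinearMap.lsmul_apply, hh_def]
    rfl
  rw [hconv]
  have hh_int : Integrable h := by
    rw [← hconv]; exact hk.integrable_convolution _ hg
  have hh_cont : Continuous h := by
    rw [← hconv]
    exact φ.hasCompactSupport_normed.continuous_convolution_left _ φ.continuous_normed
      hg.locallyIntegrable
  have key : ∀ ξ : ℝ, 𝓕 h ξ =
      (∫ t : ℝ, ((k t : ℂ) * Complex.exp (↑(-2 * π * t * ξ) * Complex.I))) * 𝓕 g ξ := by
    intro ξ
    set E : ℝ → ℂ := fun y => Complex.exp (↑(-2 * π * y * ξ) * Complex.I) with hE_def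
    have hE1 : ∀ y, ‖E y‖ = 1 := fun y => by
      simp [hE_def, Complex.norm_exp]
    have hEcont : Continuous E := by
      apply Complex.continuous_exp.comp
      continuity
    have base : Integrable (fun p : ℝ × ℝ => k p.2 • g (p.1 - p.2)) (volume.prod volume) := by
      have := hk.convolution_integrand (ContinuousLinearMap.lsmul ℝ ℝ) hg
      simpa using this
    have hFint : Integrable (fun p : ℝ × ℝ => k p.2 • (E p.1 • g (p.1 - p.2)))
        (volume.prod volume) := by
      have hm : AEStronglyMeasurable (fun p : ℝ × ℝ => k p.2 • (E p.1 • g (p.1 - p.2)))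
          (volume.prod volume) := by
        have h1 : AEStronglyMeasurable (fun p : ℝ × ℝ => E p.1 • (k p.2 • g (p.1 - p.2)))
            (volume.prod volume) :=
          ((hEcont.comp continuous_fst).aestronglyMeasurable).smul base.aestronglyMeasurable
        exact h1.congr (Filter.Eventually.of_forall fun p => smul_comm _ _ _)
      refine Integrable.mono' base.norm hm (Filter.Eventually.of_forall fun p => ?_)
      simp [norm_smul, hE1]
    calc 𝓕 h ξ = ∫ x, E x • h x := by
          rw [Real.fourier_real_eq_integral_exp_smul]
      _ = ∫ x, ∫ t, k t • (E x • g (x - t)) := by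
          congr 1; funext x
          rw [hh_def]
          dsimp only
          rw [← integral_smul]
          congr 1; funext t; rw [smul_comm]
      _ = ∫ t, ∫ x, k t • (E x • g (x - t)) :=
          integral_integral_swap hFint
      _ = ∫ t, k t • (E t • 𝓕 g ξ) := by
          congr 1; funext t
          rw [integral_smul]
          congr 1
          calc ∫ x, E x • g (x - t)
              = ∫ y, E (y + t) • g y := by
                conv_rhs => rw [← integral_sub_right_eq_self (fun y => E (y + t) • g y) t]
                congr 1; funext x; simp [sub_add_cancel]
            _ = ∫ y, E t • (E y • g y) := by
                congr 1; funext y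
                rw [smul_smul, hE_def]
                dsimp only
                rw [← Complex.exp_add]
                congr 1
                push_cast
                ring
            _ = E t • ∫ y, E y • g y := integral_smul _ _
            _ = E t • 𝓕 g ξ := by
                rw [← Real.fourier_real_eq_integral_exp_smul]
      _ = (∫ t : ℝ, ((k t : ℂ) * E t)) * 𝓕 g ξ := by
          have heq : ∀ t : ℝ, k t • (E t • 𝓕 g ξ) = ((k t : ℂ) * E t) • 𝓕 g ξ := by
            intro t
            rw [← smul_assoc]
            congr 1
          simp_rw [heq]
          rw [integral_smul_const, smul_eq_mul]
  have hFh_cont : Continuous (𝓕 h) :=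
    VectorFourier.fourierIntegral_continuous Real.continuous_fourierChar
      (by exact continuous_inner) hh_int
  have hm_le : ∀ ξ : ℝ, ‖𝓕 h ξ‖ ≤ ‖𝓕 g ξ‖ := by
    intro ξ
    rw [key ξ, norm_mul]
    have hb : ‖∫ t : ℝ, ((k t : ℂ) * Complex.exp (↑(-2 * π * t * ξ) * Complex.I))‖ ≤ 1 := by
      refine le_trans (norm_integral_le_integral_norm _) ?_
      have heq : (fun t : ℝ => ‖(k t : ℂ) * Complex.exp (↑(-2 * π * t * ξ) * Complex.I)‖)
          = fun t => k t := by
        funext t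
        rw [norm_mul]
        have h2 : ‖Complex.exp (↑(-2 * π * t * ξ) * Complex.I)‖ = 1 := by
          simp [Complex.norm_exp]
        rw [h2, mul_one, Complex.norm_real, Real.norm_eq_abs,
          _root_.abs_of_nonneg (φ.nonneg_normed t)]
      rw [heq, φ.integral_normed]
    calc ‖∫ t : ℝ, ((k t : ℂ) * Complex.exp (↑(-2 * π * t * ξ) * Complex.I))‖ * ‖𝓕 g ξ‖
        ≤ 1 * ‖𝓕 g ξ‖ := mul_le_mul_of_nonneg_right hb (norm_nonneg _)
      _ = ‖𝓕 g ξ‖ := one_mul _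
  have hFh_int : Integrable (𝓕 h) :=
    Integrable.mono' hFg.norm hFh_cont.aestronglyMeasurable
      (Filter.Eventually.of_forall hm_le)
  have hinv : 𝓕⁻ (𝓕 h) x = h x :=
    hh_int.fourierInv_fourier_eq hFh_int hh_cont.continuousAt
  rw [← hinv]
  calc ‖𝓕⁻ (𝓕 h) x‖ ≤ ∫ ξ, ‖𝓕 h ξ‖ :=
        VectorFourier.norm_fourierIntegral_le_integral_norm _ _ _ _ _
    _ ≤ ∫ ξ, ‖𝓕 g ξ‖ :=
        integral_mono hFh_int.norm hFg.norm hm_le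

/-- a.e. bound via mollification. -/
theorem ae_norm_le {g : ℝ → ℂ} (hg : Integrable g) (hFg : Integrable (𝓕 g)) :
    ∀ᵐ x : ℝ, ‖g x‖ ≤ ∫ t, ‖𝓕 g t‖ := by
  set φ : ℕ → ContDiffBump (0 : ℝ) := fun n =>
    ⟨((n : ℝ) + 1)⁻¹, 2 * ((n : ℝ) + 1)⁻¹, by positivity,
      lt_two_mul_self (by positivity)⟩ with hφ_def
  have hφ0 : Tendsto (fun n => (φ n).rOut) atTop (𝓝 0) := by
    have h1 : Tendsto (fun n : ℕ => ((n : ℝ) + 1)⁻¹) atTop (𝓝 0) := by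
      simpa [one_div] using tendsto_one_div_add_atTop_nhds_zero_nat (𝕜 := ℝ)
    have h2 := h1.const_mul (2 : ℝ)
    rw [mul_zero] at h2
    exact h2
  have hK : ∀ᶠ n in atTop, (φ n).rOut ≤ 2 * (φ n).rIn :=
    Filter.Eventually.of_forall fun n => le_of_eq rfl
  have hconv := ContDiffBump.ae_convolution_tendsto_right_of_locallyIntegrable
    hφ0 hK hg.locallyIntegrable
  filter_upwards [hconv] with x hx
  exact le_of_tendsto hx.norm
    (Filter.Eventually.of_forall fun n => conv_norm_le hg hFg (φ n) x)

end MellinL1X2Aux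

open scoped FourierTransform Convolution

/-- if `f ∈ X_c` and its Mellin transform `M_c[f](c + i·)` is in `L¹(ℝ)`,
then `f ∈ X²_c`. -/
theorem mellin_L1_implies_X2c
    (c : ℝ) (f : ℝ → ℂ) (hf : MemX c 1 f)
    (hM : MeasureTheory.Integrable (fun t : ℝ => mellinAt c f t)) :
    MemX c 2 f := by
  obtain ⟨hmeas, hint⟩ := hf
  have hMc : MellinConvergent f (c : ℂ) := by
    rw [MellinConvergent, mellin_convergent_iff_norm Subset.rfl measurableSet_Ioi hmeas]
    have heq : (fun t : ℝ => t ^ ((c : ℂ).re - 1) * ‖f t‖)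
        = fun r : ℝ => ‖f r‖ ^ (1 : ℝ) * r ^ (c * 1 - 1) := by
      funext t
      rw [Complex.ofReal_re, Real.rpow_one, mul_one, mul_comm]
    rw [heq]
    exact hint
  set g : ℝ → ℂ := fun u => Real.exp (-c * u) • f (Real.exp (-u)) with hg_def
  have hgint : Integrable g := by
    rw [MellinConvergent, ← MellinL1X2Aux.rexp_neg_image_aux,
      integrableOn_image_iff_integrableOn_abs_deriv_smul MeasurableSet.univ
        MellinL1X2Aux.rexp_neg_deriv_aux MellinL1X2Aux.rexp_neg_injOn_aux,
      integrableOn_univ] at hMc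
    rw [hg_def]
    refine hMc.congr (Filter.Eventually.of_forall fun x => ?_)
    simp only [Function.comp_apply]
    rw [abs_neg, abs_of_pos (Real.exp_pos _)]
    rw [show ((Real.exp (-x) : ℝ) : ℂ) = Complex.exp (-(x : ℂ)) by
      rw [Complex.ofReal_exp]; norm_num]
    rw [MellinL1X2Aux.rexp_cexp_aux x (c : ℂ) (f (Real.exp (-x)))]
    rw [Complex.real_smul, smul_eq_mul]
    congr 1
    push_cast
    ring_nf
  have hFg : Integrable (𝓕 g) := by
    have h2π : 2 * Real.pi ≠ 0 := by positivity
    have hVert : Integrable fun t : ℝ => mellin f ((c : ℂ) + t * Complex.I) := by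
      have := hM
      simp only [mellinAt] at this
      have heq : (fun t : ℝ => mellin f ((c : ℂ) + t * Complex.I))
          = fun t : ℝ => mellin f ((c : ℂ) + Complex.I * t) := by
        funext t; rw [mul_comm]
      rw [heq]
      exact this
    have h1 : Integrable (𝓕 (fun u ↦ Real.exp (-(c * u)) • f (Real.exp (-u)))) := by
      simpa [mellin_eq_fourier, mul_div_cancel_right₀ _ h2π]
        using hVert.comp_mul_right' h2π
    simp_rw [neg_mul_eq_neg_mul] at h1
    exact h1
  have hae : ∀ᵐ x : ℝ, ‖g x‖ ≤ ∫ t, ‖𝓕 g t‖ := MellinL1X2Aux.ae_norm_le hgint hFg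
  set C : ℝ := ∫ t, ‖𝓕 g t‖ with hC_def
  refine ⟨hmeas, ?_⟩
  rw [← MellinL1X2Aux.rexp_neg_image_aux,
    integrableOn_image_iff_integrableOn_abs_deriv_smul MeasurableSet.univ
      MellinL1X2Aux.rexp_neg_deriv_aux MellinL1X2Aux.rexp_neg_injOn_aux,
    integrableOn_univ]
  have hnorm : ∀ x : ℝ, ‖g x‖ = Real.exp (-c * x) * ‖f (Real.exp (-x))‖ := by
    intro x
    rw [hg_def]
    dsimp only
    rw [norm_smul, Real.norm_eq_abs, abs_of_pos (Real.exp_pos _)]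
  have heq : ∀ x : ℝ, |(-(Real.exp ∘ Neg.neg) x)| •
      ((fun r : ℝ => ‖f r‖ ^ (2 : ℝ) * r ^ (c * 2 - 1)) ((Real.exp ∘ Neg.neg) x))
      = ‖g x‖ * ‖g x‖ := by
    intro x
    have h2 : Real.exp (-x) ^ (c * 2 - 1) = Real.exp ((-x) * (c * 2 - 1)) := by
      rw [Real.rpow_def_of_pos (Real.exp_pos _), Real.log_exp]
    have h3 : ‖f (Real.exp (-x))‖ ^ (2 : ℝ)
        = ‖f (Real.exp (-x))‖ * ‖f (Real.exp (-x))‖ := by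
      rw [show (2 : ℝ) = ((2 : ℕ) : ℝ) by norm_num, Real.rpow_natCast]
      ring
    simp only [Function.comp_apply, smul_eq_mul]
    rw [abs_neg, abs_of_pos (Real.exp_pos _), h2, h3, hnorm x]
    calc Real.exp (-x) * (‖f (Real.exp (-x))‖ * ‖f (Real.exp (-x))‖ * Real.exp ((-x) * (c * 2 - 1)))
        = ‖f (Real.exp (-x))‖ * ‖f (Real.exp (-x))‖ * (Real.exp (-x) * Real.exp ((-x) * (c * 2 - 1))) := by
          ring
      _ = ‖f (Real.exp (-x))‖ * ‖f (Real.exp (-x))‖ * Real.exp ((-x) + (-x) * (c * 2 - 1)) := by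
          rw [Real.exp_add]
      _ = ‖f (Real.exp (-x))‖ * ‖f (Real.exp (-x))‖ * Real.exp ((-(c * x)) + (-(c * x))) := by
          congr 2
          ring
      _ = (Real.exp (-c * x) * ‖f (Real.exp (-x))‖) * (Real.exp (-c * x) * ‖f (Real.exp (-x))‖) := by
          rw [Real.exp_add]
          ring_nf
  have hsq : Integrable (fun x : ℝ => ‖g x‖ * ‖g x‖) := by
    refine Integrable.mono' (hgint.norm.const_mul C)
      (hgint.aestronglyMeasurable.norm.mul hgint.aestronglyMeasurable.norm) ?_
    filter_upwards [hae] with x hx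
    rw [Real.norm_of_nonneg (by positivity)]
    exact mul_le_mul_of_nonneg_right hx (norm_nonneg _)
  refine hsq.congr ?_
  filter_upwards with x
  exact (heq x).symm
end

section
/- The map g ↦ f where f(r,θ) := r^{−c} e^{−icθ} g(log r + iθ) is a bijection between the classical Hardy space H^p(S_a) on the horizontal strip S_a = {z : |Im z| < a} and the Mellin–Hardy space H^p_c(ℍ_a), with inverse f ↦ g where g(x+iy) := e^{c(x+iy)} f(eˣ, y); moreover ‖f‖_{H^p_c(ℍ_a)} equals the H^p(S_a)-norm of g. -/
open MeasureTheory Complex Filter Topology Set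

/-- The set of values whose supremum defines the classical Hardy norm for the strip `S_a`. -/
def hpVals (p a : ℝ) (g : ℂ → ℂ) : Set ℝ :=
  {v | ∃ y : ℝ, 0 < y ∧ y < a ∧
    v = (((∫ x : ℝ, ‖g (x + Complex.I * y)‖ ^ p) +
          ∫ x : ℝ, ‖g (x - Complex.I * y)‖ ^ p) / 2) ^ (1 / p)}

/-- Membership in the classical Hardy space `H^p(S_a)` on the strip `{|Im z| < a}`. -/
def MemHp (p a : ℝ) (g : ℂ → ℂ) : Prop :=
  DifferentiableOn ℂ g {z : ℂ | |z.im| < a} ∧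
    (∀ y : ℝ, |y| < a → MeasureTheory.Integrable (fun x : ℝ => ‖g (x + Complex.I * y)‖ ^ p)) ∧
    BddAbove (hpVals p a g)

/-- The classical Hardy norm on the strip. -/
noncomputable def HpNorm (p a : ℝ) (g : ℂ → ℂ) : ℝ := sSup (hpVals p a g)

/-- The map `g ↦ f`, `f(r,θ) = r^{-c}e^{-icθ} g(log r + iθ)`. -/
noncomputable def toPolar (c : ℝ) (g : ℂ → ℂ) : ℝ × ℝ → ℂ := fun q =>
  Complex.exp (-(c : ℂ) * ((Real.log q.1 : ℂ) + Complex.I * q.2)) *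
    g ((Real.log q.1 : ℂ) + Complex.I * q.2)

/-- The map `f ↦ g`, `g(x+iy) = e^{c(x+iy)} f(eˣ, y)`. -/
noncomputable def toStrip (c : ℝ) (f : ℝ × ℝ → ℂ) : ℂ → ℂ := fun z =>
  Complex.exp ((c : ℂ) * z) * f (Real.exp z.re, z.im)


/-! ### Auxiliary lemmas -/

section Aux

open MeasureTheory Complex Filter Topology Set

/-- Substitution `r = e^x` on `(0,∞)`. -/
private lemma subst_exp_integral (F : ℝ → ℝ) :
    ∫ r in Set.Ioi (0:ℝ), F r = ∫ x : ℝ, Real.exp x * F (Real.exp x) := by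
  have h := integral_image_eq_integral_abs_deriv_smul (f := Real.exp) (f' := Real.exp)
    MeasurableSet.univ (fun x _ => (Real.hasDerivAt_exp x).hasDerivWithinAt)
    (Real.exp_injective.injOn) F
  simp only [Set.image_univ, Real.range_exp, Measure.restrict_univ, smul_eq_mul,
    abs_of_pos (Real.exp_pos _)] at h
  exact h

private lemma subst_exp_integrable (F : ℝ → ℝ) :
    IntegrableOn F (Set.Ioi (0:ℝ)) ↔ Integrable (fun x : ℝ => Real.exp x * F (Real.exp x)) := by
  have h := integrableOn_image_iff_integrableOn_abs_deriv_smul (f := Real.exp) (f' := Real.exp)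
    MeasurableSet.univ (fun x _ => (Real.hasDerivAt_exp x).hasDerivWithinAt)
    (Real.exp_injective.injOn) F
  simpa only [Set.image_univ, Real.range_exp, smul_eq_mul, abs_of_pos (Real.exp_pos _),
    integrableOn_univ] using h

private lemma ptwise1 (c p : ℝ) (g : ℂ → ℂ) (θ x : ℝ) :
    Real.exp x * (‖toPolar c g (Real.exp x, θ)‖ ^ p * (Real.exp x) ^ (c * p - 1)) =
      ‖g (↑x + Complex.I * ↑θ)‖ ^ p := by
  have h1 : ‖toPolar c g (Real.exp x, θ)‖ =
      Real.exp (-(c*x)) * ‖g (↑x + Complex.I * ↑θ)‖ := by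
    simp only [toPolar, norm_mul, Real.log_exp, Complex.norm_exp]
    congr 2
    simp [Complex.add_re, Complex.mul_re]
  rw [h1, Real.mul_rpow (Real.exp_pos _).le (norm_nonneg _), ← Real.exp_mul,
    ← Real.exp_mul]
  have hone : Real.exp x * Real.exp (-(c*x)*p) * Real.exp (x*(c*p-1)) = 1 := by
    rw [← Real.exp_add, ← Real.exp_add, show x + -(c*x)*p + x*(c*p-1) = 0 by ring,
      Real.exp_zero]
  calc Real.exp x * (Real.exp (-(c * x) * p) * ‖g (↑x + Complex.I * ↑θ)‖ ^ p *
        Real.exp (x * (c * p - 1)))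
      = (Real.exp x * Real.exp (-(c*x)*p) * Real.exp (x*(c*p-1))) *
        ‖g (↑x + Complex.I * ↑θ)‖ ^ p := by ring
    _ = ‖g (↑x + Complex.I * ↑θ)‖ ^ p := by rw [hone, one_mul]

private lemma ptwise2 (c p : ℝ) (f : ℝ × ℝ → ℂ) (y x : ℝ) :
    ‖toStrip c f (↑x + Complex.I * ↑y)‖ ^ p =
      Real.exp x * (‖f (Real.exp x, y)‖ ^ p * (Real.exp x) ^ (c * p - 1)) := by
  have hre : (↑x + Complex.I * ↑y).re = x := by simp
  have him : (↑x + Complex.I * ↑y).im = y := by simp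
  have h1 : ‖toStrip c f (↑x + Complex.I * ↑y)‖ =
      Real.exp (c*x) * ‖f (Real.exp x, y)‖ := by
    simp only [toStrip, norm_mul, hre, him, Complex.norm_exp]
    congr 2
    simp [Complex.mul_re]
  rw [h1, Real.mul_rpow (Real.exp_pos _).le (norm_nonneg _), ← Real.exp_mul, ← Real.exp_mul]
  have hone : Real.exp (c*x*p) = Real.exp x * Real.exp (x*(c*p-1)) := by
    rw [← Real.exp_add]; ring_nf
  rw [hone]; ring

private lemma Xnorm_pow (c p : ℝ) (hp : 1 ≤ p) (φ : ℝ → ℂ) :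
    Xnorm c p φ ^ p = ∫ r in Set.Ioi (0 : ℝ), ‖φ r‖ ^ p * r ^ (c * p - 1) := by
  have hI : 0 ≤ ∫ r in Set.Ioi (0 : ℝ), ‖φ r‖ ^ p * r ^ (c * p - 1) :=
    setIntegral_nonneg measurableSet_Ioi fun r hr =>
      mul_nonneg (Real.rpow_nonneg (norm_nonneg _) _) (Real.rpow_nonneg (le_of_lt hr) _)
  rw [Xnorm, one_div, Real.rpow_inv_rpow hI (by linarith)]

private lemma key1 (c p : ℝ) (g : ℂ → ℂ) (θ : ℝ) :
    (∫ r in Set.Ioi (0:ℝ), ‖toPolar c g (r, θ)‖ ^ p * r ^ (c * p - 1)) =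
      ∫ x : ℝ, ‖g (↑x + Complex.I * ↑θ)‖ ^ p := by
  rw [subst_exp_integral]
  exact integral_congr_ae (Filter.Eventually.of_forall fun x => ptwise1 c p g θ x)

private lemma key1int (c p : ℝ) (g : ℂ → ℂ) (θ : ℝ) :
    IntegrableOn (fun r => ‖toPolar c g (r, θ)‖ ^ p * r ^ (c * p - 1)) (Set.Ioi (0:ℝ)) ↔
      Integrable (fun x : ℝ => ‖g (↑x + Complex.I * ↑θ)‖ ^ p) := by
  rw [subst_exp_integrable]
  exact integrable_congr (Filter.Eventually.of_forall fun x => ptwise1 c p g θ x)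

private lemma key2 (c p : ℝ) (f : ℝ × ℝ → ℂ) (y : ℝ) :
    (∫ x : ℝ, ‖toStrip c f (↑x + Complex.I * ↑y)‖ ^ p) =
      ∫ r in Set.Ioi (0:ℝ), ‖f (r, y)‖ ^ p * r ^ (c * p - 1) := by
  rw [subst_exp_integral]
  exact integral_congr_ae (Filter.Eventually.of_forall fun x => (ptwise2 c p f y x))

private lemma key2int (c p : ℝ) (f : ℝ × ℝ → ℂ) (y : ℝ) :
    IntegrableOn (fun r => ‖f (r, y)‖ ^ p * r ^ (c * p - 1)) (Set.Ioi (0:ℝ)) ↔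
      Integrable (fun x : ℝ => ‖toStrip c f (↑x + Complex.I * ↑y)‖ ^ p) := by
  rw [subst_exp_integrable]
  exact integrable_congr (Filter.Eventually.of_forall fun x => (ptwise2 c p f y x).symm)

private lemma neg_arg (x θ : ℝ) : (↑x + Complex.I * ↑(-θ) : ℂ) = ↑x - Complex.I * ↑θ := by
  push_cast; ring

private lemma vals_eq1 (c p a : ℝ) (hp : 1 ≤ p) (g : ℂ → ℂ) :
    hardyVals c p a (toPolar c g) = hpVals p a g := by
  have hkey : ∀ θ : ℝ, (Xnorm c p fun r => toPolar c g (r, θ)) ^ p =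
      ∫ x : ℝ, ‖g (↑x + Complex.I * ↑θ)‖ ^ p := fun θ => by
    rw [Xnorm_pow c p hp, key1]
  ext v
  constructor
  · rintro ⟨θ, h1, h2, rfl⟩
    refine ⟨θ, h1, h2, ?_⟩
    rw [hkey θ, hkey (-θ)]
    simp_rw [neg_arg]
  · rintro ⟨y, h1, h2, rfl⟩
    refine ⟨y, h1, h2, ?_⟩
    rw [hkey y, hkey (-y)]
    simp_rw [neg_arg]

private lemma vals_eq2 (c p a : ℝ) (hp : 1 ≤ p) (f : ℝ × ℝ → ℂ) :
    hpVals p a (toStrip c f) = hardyVals c p a f := by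
  have hkey : ∀ θ : ℝ, (∫ x : ℝ, ‖toStrip c f (↑x + Complex.I * ↑θ)‖ ^ p) =
      (Xnorm c p fun r => f (r, θ)) ^ p := fun θ => by
    rw [Xnorm_pow c p hp, key2]
  ext v
  constructor
  · rintro ⟨y, h1, h2, rfl⟩
    refine ⟨y, h1, h2, ?_⟩
    rw [← hkey y, ← hkey (-y)]
    simp_rw [neg_arg]
  · rintro ⟨θ, h1, h2, rfl⟩
    refine ⟨θ, h1, h2, ?_⟩
    rw [← hkey θ, ← hkey (-θ)]
    simp_rw [neg_arg]

private lemma isOpen_strip (a : ℝ) : IsOpen {z : ℂ | |z.im| < a} := by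
  have : {z : ℂ | |z.im| < a} = Complex.im ⁻¹' (Set.Ioo (-a) a) := by
    ext z; simp [abs_lt]
  rw [this]
  exact isOpen_Ioo.preimage Complex.continuous_im

private lemma psi_eq (r θ : ℝ) (hr : 0 < r) :
    (r : ℂ) * Complex.exp (Complex.I * θ) =
      Complex.exp ((Real.log r : ℂ) + Complex.I * θ) := by
  rw [Complex.exp_add, ← Complex.ofReal_exp, Real.exp_log hr]

private lemma polarAnalytic_A {c a : ℝ} {g : ℂ → ℂ}
    (hg : DifferentiableOn ℂ g {z : ℂ | |z.im| < a}) :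
    PolarAnalyticOn (toPolar c g) (Hstrip a) := by
  rintro ⟨r₀, θ₀⟩ ⟨hr₀, hθ₀⟩
  set z₀ : ℂ := (Real.log r₀ : ℂ) + Complex.I * θ₀ with hz₀def
  have hz₀im : z₀.im = θ₀ := by simp [hz₀def]
  have hz₀mem : z₀ ∈ {z : ℂ | |z.im| < a} := by simpa [hz₀im] using hθ₀
  set h : ℂ → ℂ := fun z => Complex.exp (-(c : ℂ) * z) * g z with hh
  have hgd : DifferentiableAt ℂ g z₀ :=
    hg.differentiableAt ((isOpen_strip a).mem_nhds hz₀mem)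
  have hhd : DifferentiableAt ℂ h z₀ := by
    apply DifferentiableAt.mul _ hgd
    exact (Complex.differentiable_exp.comp
      ((differentiable_id.const_mul _))).differentiableAt
  obtain ⟨d, hd⟩ : ∃ d, HasDerivAt h d z₀ := ⟨deriv h z₀, hhd.hasDerivAt⟩
  refine ⟨d / Complex.exp z₀, ?_⟩
  set ℓ : ℝ × ℝ → ℂ := fun q => (Real.log q.1 : ℂ) + Complex.I * q.2 with hℓ
  have hcont : ContinuousAt ℓ (r₀, θ₀) := by
    apply ContinuousAt.add
    · exact Complex.continuous_ofReal.continuousAt.comp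
        ((Real.continuousAt_log hr₀.ne').comp continuous_fst.continuousAt)
    · exact continuousAt_const.mul
        (Complex.continuous_ofReal.continuousAt.comp continuous_snd.continuousAt)
  have T1 : Tendsto ℓ (nhdsWithin (r₀, θ₀) (Hstrip a \ {(r₀, θ₀)}))
      (nhdsWithin z₀ {z₀}ᶜ) := by
    rw [tendsto_nhdsWithin_iff]
    constructor
    · exact hcont.tendsto.mono_left nhdsWithin_le_nhds
    · filter_upwards [self_mem_nhdsWithin] with q hq
      intro hlq
      apply hq.2
      have him : q.2 = θ₀ := by
        have := congrArg Complex.im hlq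
        simpa [hℓ, hz₀def] using this
      have hre : Real.log q.1 = Real.log r₀ := by
        have := congrArg Complex.re hlq
        simpa [hℓ, hz₀def] using this
      have hq1 : q.1 = r₀ := Real.log_injOn_pos (Set.mem_Ioi.mpr hq.1.1)
        (Set.mem_Ioi.mpr hr₀) hre
      simp [Prod.ext_iff, hq1, him]
  have t1 : Tendsto (slope h z₀) (nhdsWithin z₀ {z₀}ᶜ) (nhds d) :=
    hasDerivAt_iff_tendsto_slope.mp hd
  have t2 : Tendsto (slope Complex.exp z₀) (nhdsWithin z₀ {z₀}ᶜ) (nhds (Complex.exp z₀)) :=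
    hasDerivAt_iff_tendsto_slope.mp (Complex.hasDerivAt_exp z₀)
  have T2 : Tendsto (fun z => (h z - h z₀) / (Complex.exp z - Complex.exp z₀))
      (nhdsWithin z₀ {z₀}ᶜ) (nhds (d / Complex.exp z₀)) := by
    have := t1.mul (t2.inv₀ (Complex.exp_ne_zero z₀))
    rw [← div_eq_mul_inv] at this
    refine this.congr' ?_
    filter_upwards [self_mem_nhdsWithin] with z hz
    have hzne : z - z₀ ≠ 0 := sub_ne_zero.mpr hz
    rw [slope_def_field, slope_def_field, div_eq_mul_inv (h z - h z₀), inv_div,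
      ← div_eq_mul_inv]
    rw [div_mul_div_comm, mul_comm (h z - h z₀) (z - z₀), mul_div_mul_left _ _ hzne]
  refine (T2.comp T1).congr' ?_
  filter_upwards [self_mem_nhdsWithin] with q hq
  have hq1 : 0 < q.1 := hq.1.1
  show (h (ℓ q) - h z₀) / (Complex.exp (ℓ q) - Complex.exp z₀) = _
  rw [psi_eq q.1 q.2 hq1, psi_eq r₀ θ₀ hr₀]
  rfl

private lemma exp_ne_of_close {z z₀ : ℂ} (hne : z ≠ z₀) (hclose : ‖z - z₀‖ < 1) :
    Complex.exp z ≠ Complex.exp z₀ := by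
  intro h
  obtain ⟨n, hn⟩ := Complex.exp_eq_exp_iff_exists_int.mp h
  have hz : z - z₀ = n * (2 * Real.pi * Complex.I) := by rw [hn]; ring
  rcases eq_or_ne n 0 with rfl | hn0
  · simp at hz
    exact hne (sub_eq_zero.mp hz)
  · have : (1:ℝ) ≤ ‖z - z₀‖ := by
      rw [hz]
      have h1 : ‖(n : ℂ) * (2 * Real.pi * Complex.I)‖ = |(n:ℝ)| * (2 * Real.pi) := by
        simp [norm_mul, Complex.norm_intCast, Complex.norm_I,
          Complex.norm_two, Complex.norm_real, _root_.abs_of_nonneg Real.pi_pos.le]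
      rw [h1]
      have : (1:ℝ) ≤ |(n:ℝ)| := by
        rw [← Int.cast_abs]
        exact_mod_cast Int.one_le_abs hn0
      nlinarith [Real.pi_gt_three]
    linarith

private lemma differentiableOn_B {c a : ℝ} {f : ℝ × ℝ → ℂ}
    (hf : PolarAnalyticOn f (Hstrip a)) :
    DifferentiableOn ℂ (toStrip c f) {z : ℂ | |z.im| < a} := by
  intro z₀ hz₀
  set S := {z : ℂ | |z.im| < a} with hS
  set P : ℂ → ℝ × ℝ := fun z => (Real.exp z.re, z.im) with hP
  have hp₀ : P z₀ ∈ Hstrip a := ⟨Real.exp_pos _, hz₀⟩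
  obtain ⟨L, hL⟩ := hf (P z₀) hp₀
  have hpsi : ∀ z : ℂ, ((Real.exp z.re : ℝ) : ℂ) * Complex.exp (Complex.I * (z.im : ℂ)) =
      Complex.exp z := by
    intro z
    rw [psi_eq _ _ (Real.exp_pos _), Real.log_exp]
    congr 1
    rw [mul_comm]
    exact z.re_add_im
  have T1 : Tendsto P (nhdsWithin z₀ (S \ {z₀}))
      (nhdsWithin (P z₀) (Hstrip a \ {P z₀})) := by
    rw [tendsto_nhdsWithin_iff]
    constructor
    · have : ContinuousAt P z₀ := by
        apply ContinuousAt.prodMk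
        · exact Real.continuous_exp.continuousAt.comp Complex.continuous_re.continuousAt
        · exact Complex.continuous_im.continuousAt
      exact this.tendsto.mono_left nhdsWithin_le_nhds
    · filter_upwards [self_mem_nhdsWithin] with z hz
      refine ⟨⟨Real.exp_pos _, hz.1⟩, ?_⟩
      intro hPz
      apply hz.2
      have h1 : Real.exp z.re = Real.exp z₀.re := congrArg Prod.fst hPz
      have h2 : z.im = z₀.im := congrArg Prod.snd hPz
      exact Set.mem_singleton_iff.mpr (Complex.ext (Real.exp_injective h1) h2)
  have T2 : Tendsto (fun z => (f (P z) - f (P z₀)) / (Complex.exp z - Complex.exp z₀))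
      (nhdsWithin z₀ (S \ {z₀})) (nhds L) := by
    have := hL.comp T1
    refine this.congr' ?_
    filter_upwards [self_mem_nhdsWithin] with z _
    simp only [Function.comp_apply, hP]
    rw [hpsi z, hpsi z₀]
  have T3 : Tendsto (slope Complex.exp z₀) (nhdsWithin z₀ (S \ {z₀}))
      (nhds (Complex.exp z₀)) :=
    (hasDerivAt_iff_tendsto_slope.mp (Complex.hasDerivAt_exp z₀)).mono_left
      (nhdsWithin_mono z₀ fun z hz => hz.2)
  have T4 := T2.mul T3
  have T5 : HasDerivWithinAt (fun z => f (P z)) (L * Complex.exp z₀) S z₀ := by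
    rw [hasDerivWithinAt_iff_tendsto_slope]
    refine T4.congr' ?_
    have hball : ∀ᶠ z in nhdsWithin z₀ (S \ {z₀}), ‖z - z₀‖ < 1 := by
      apply Filter.Eventually.filter_mono nhdsWithin_le_nhds
      have : Metric.ball z₀ 1 ∈ nhds z₀ := Metric.ball_mem_nhds z₀ one_pos
      filter_upwards [this] with z hz
      simpa [Metric.mem_ball, dist_eq_norm] using hz
    filter_upwards [self_mem_nhdsWithin, hball] with z hz hz1
    have hexp : Complex.exp z - Complex.exp z₀ ≠ 0 :=
      sub_ne_zero.mpr (exp_ne_of_close hz.2 hz1)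
    rw [slope_def_field, slope_def_field]
    rw [div_mul_div_comm, mul_comm (f (P z) - f (P z₀)) (Complex.exp z - Complex.exp z₀),
      mul_div_mul_left _ _ hexp]
  have : DifferentiableWithinAt ℂ (toStrip c f) S z₀ := by
    have h1 : DifferentiableWithinAt ℂ (fun z : ℂ => Complex.exp ((c:ℂ) * z)) S z₀ :=
      (Complex.differentiable_exp.comp (differentiable_id.const_mul _)).differentiableAt
        |>.differentiableWithinAt
    exact h1.mul T5.differentiableWithinAt
  exact this

end Aux

/-- `g ↦ toPolar c g` is a norm-preserving bijection between the classical
Hardy space `H^p(S_a)` and the Mellin–Hardy space `H^p_c(ℍ_a)`, with inverse `f ↦ toStrip c f`. -/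
theorem hardy_correspondence (p c a : ℝ) (hp : 1 ≤ p) (ha : 0 < a) :
    (∀ g : ℂ → ℂ, MemHp p a g →
        MemHardy c p a (toPolar c g) ∧ HardyNorm c p a (toPolar c g) = HpNorm p a g) ∧
    (∀ f : ℝ × ℝ → ℂ, MemHardy c p a f →
        MemHp p a (toStrip c f) ∧ HpNorm p a (toStrip c f) = HardyNorm c p a f) ∧
    (∀ g : ℂ → ℂ, ∀ z : ℂ, |z.im| < a → toStrip c (toPolar c g) z = g z) ∧
    (∀ f : ℝ × ℝ → ℂ, ∀ q ∈ Hstrip a, toPolar c (toStrip c f) q = f q) := by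
  refine ⟨?_, ?_, ?_, ?_⟩
  · -- direction 1
    rintro g ⟨hdiff, hint, hbdd⟩
    refine ⟨⟨polarAnalytic_A hdiff, ?_, ?_⟩, ?_⟩
    · intro θ hθ
      constructor
      · -- a.e. strong measurability
        have hℓ : ContinuousOn (fun r : ℝ => ((Real.log r : ℂ) + Complex.I * θ))
            (Set.Ioi (0:ℝ)) := by
          apply ContinuousOn.add _ continuousOn_const
          exact Complex.continuous_ofReal.comp_continuousOn
            (Real.continuousOn_log.mono fun x hx => ne_of_gt hx)
        have hmap : Set.MapsTo (fun r : ℝ => ((Real.log r : ℂ) + Complex.I * θ))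
            (Set.Ioi (0:ℝ)) {z : ℂ | |z.im| < a} := by
          intro r _
          simpa using hθ
        have hcont : ContinuousOn (fun r : ℝ => toPolar c g (r, θ)) (Set.Ioi (0:ℝ)) := by
          apply ContinuousOn.mul
          · exact Complex.continuous_exp.comp_continuousOn (continuousOn_const.mul hℓ)
          · exact (hdiff.continuousOn.comp hℓ hmap)
        exact hcont.aestronglyMeasurable measurableSet_Ioi
      · exact (key1int c p g θ).mpr (hint θ hθ)
    · rw [show BddAbove (hardyVals c p a (toPolar c g)) ↔ BddAbove (hpVals p a g) by
        rw [vals_eq1 c p a hp]]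
      exact hbdd
    · rw [HardyNorm, HpNorm, vals_eq1 c p a hp]
  · -- direction 2
    rintro f ⟨hanal, hX, hbdd⟩
    refine ⟨⟨differentiableOn_B hanal, ?_, ?_⟩, ?_⟩
    · intro y hy
      exact (key2int c p f y).mp (hX y hy).2
    · rw [show BddAbove (hpVals p a (toStrip c f)) ↔ BddAbove (hardyVals c p a f) by
        rw [vals_eq2 c p a hp]]
      exact hbdd
    · rw [HpNorm, HardyNorm, vals_eq2 c p a hp]
  · -- left inverse
    intro g z _
    simp only [toStrip, toPolar, Real.log_exp]
    have hz : ((z.re : ℂ) + Complex.I * z.im) = z := by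
      rw [mul_comm]; exact z.re_add_im
    rw [hz, ← mul_assoc, ← Complex.exp_add,
      show (c:ℂ) * z + -(c:ℂ) * z = 0 by ring, Complex.exp_zero, one_mul]
  · -- right inverse
    rintro f ⟨r, θ⟩ ⟨hr, _⟩
    simp only [toPolar, toStrip]
    have h1 : ((Real.log r : ℂ) + Complex.I * θ).re = Real.log r := by simp
    have h2 : ((Real.log r : ℂ) + Complex.I * θ).im = θ := by simp
    rw [h1, h2, Real.exp_log hr, ← mul_assoc, ← Complex.exp_add,
      show -(c:ℂ) * ((Real.log r : ℂ) + Complex.I * θ) +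
        (c:ℂ) * ((Real.log r : ℂ) + Complex.I * θ) = 0 by ring,
      Complex.exp_zero, one_mul]
end

section
/- Let f ∈ H^p_c(ℍ_a) and 0 < a₁ < a. Then for all (r,θ) with r > 0 and |θ| ≤ a₁, one has |f(r,θ)| ≤ r^{−c} (4/(π(a−a₁)))^{1/p} ‖f‖_{H^p_c(ℍ_a)}. -/
open MeasureTheory Complex Filter Topology Set

namespace HardyAux

lemma isOpen_S (a : ℝ) : IsOpen {z : ℂ | |z.im| < a} :=
  isOpen_lt (Complex.continuous_im.abs) continuous_const

lemma exp_polar (w : ℂ) :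
    (Real.exp w.re : ℂ) * Complex.exp (Complex.I * w.im) = Complex.exp w := by
  rw [Complex.ofReal_exp, ← Complex.exp_add]
  congr 1
  rw [mul_comm]
  exact_mod_cast Complex.re_add_im w

lemma differentiable_h {a : ℝ} (c : ℝ) {f : ℝ × ℝ → ℂ} (hf : PolarAnalyticOn f (Hstrip a))
    {z : ℂ} (hz : |z.im| < a) :
    DifferentiableAt ℂ (fun w => Complex.exp (c * w) * f (Real.exp w.re, w.im)) z := by
  set S : Set ℂ := {z : ℂ | |z.im| < a} with hSdef
  set g : ℂ → ℂ := fun w => f (Real.exp w.re, w.im) with hgdef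
  set P₀ : ℝ × ℝ := (Real.exp z.re, z.im) with hP₀
  have hP₀mem : P₀ ∈ Hstrip a := ⟨Real.exp_pos _, hz⟩
  obtain ⟨L, hL⟩ := hf P₀ hP₀mem
  set Φ : ℂ → ℝ × ℝ := fun w => (Real.exp w.re, w.im) with hΦ
  have hΦc : Continuous Φ :=
    (Real.continuous_exp.comp Complex.continuous_re).prodMk Complex.continuous_im
  have T1 : Filter.Tendsto Φ (nhdsWithin z (S \ {z})) (nhdsWithin P₀ (Hstrip a \ {P₀})) := by
    rw [tendsto_nhdsWithin_iff]
    constructor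
    · exact hΦc.continuousAt.tendsto.mono_left nhdsWithin_le_nhds
    · filter_upwards [self_mem_nhdsWithin] with w hw
      refine ⟨⟨Real.exp_pos _, hw.1⟩, fun hEq => hw.2 ?_⟩
      have h1 : Real.exp w.re = Real.exp z.re := congrArg Prod.fst hEq
      have h2 : w.im = z.im := congrArg Prod.snd hEq
      have : w.re = z.re := Real.exp_eq_exp.mp h1
      simp only [Set.mem_singleton_iff]
      exact Complex.ext this h2
  have T2 : Filter.Tendsto (fun w => (g w - g z) / (Complex.exp w - Complex.exp z))
      (nhdsWithin z (S \ {z})) (nhds L) := by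
    have := hL.comp T1
    refine this.congr fun w => ?_
    show (f (Φ w) - f P₀) / _ = _
    simp only [hΦ, hP₀, hgdef]
    rw [exp_polar w]
    congr 2
    exact exp_polar z
  have T3 : Filter.Tendsto (fun w => (Complex.exp w - Complex.exp z) / (w - z))
      (nhdsWithin z (S \ {z})) (nhds (Complex.exp z)) := by
    have h3 : HasDerivAt Complex.exp (Complex.exp z) z := Complex.hasDerivAt_exp z
    have := (hasDerivAt_iff_tendsto_slope.mp h3).mono_left
      (nhdsWithin_mono z (fun w hw => hw.2 : S \ {z} ⊆ {z}ᶜ))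
    refine this.congr fun w => ?_
    rw [slope_def_field]
  have T4 := T2.mul T3
  have heq : ∀ᶠ w in nhdsWithin z (S \ {z}),
      ((g w - g z) / (Complex.exp w - Complex.exp z)) * ((Complex.exp w - Complex.exp z) / (w - z))
        = slope g z w := by
    have hball : ∀ᶠ w in nhdsWithin z (S \ {z}), dist w z < 1 :=
      eventually_nhdsWithin_of_eventually_nhds (Metric.eventually_nhds_iff.mpr ⟨1, one_pos, fun {w} hw => hw⟩)
    filter_upwards [hball, self_mem_nhdsWithin] with w hw1 hw2
    have hwz : w ≠ z := fun h => hw2.2 h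
    have hde : Complex.exp w ≠ Complex.exp z := by
      intro hEq
      rcases Complex.exp_eq_exp_iff_exists_int.mp hEq with ⟨n, hn⟩
      have hn0 : n ≠ 0 := by
        rintro rfl; simp at hn; exact hwz hn
      have : dist w z = |(n : ℝ)| * (2 * Real.pi) := by
        rw [dist_eq_norm, hn]
        simp [abs_of_pos Real.pi_pos, Complex.norm_real, norm_mul, Complex.norm_intCast,
          Complex.norm_I, abs_of_pos (two_pos (α := ℝ))]
      have h1 : (1 : ℝ) ≤ |(n : ℝ)| := by
        rw [← Int.cast_abs]; exact_mod_cast Int.one_le_abs hn0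
      nlinarith [Real.pi_gt_three, hw1]
    rw [slope_def_field]
    field_simp
  have hg : HasDerivAt g (L * Complex.exp z) z := by
    have hin : HasDerivWithinAt g (L * Complex.exp z) S z :=
      hasDerivWithinAt_iff_tendsto_slope.mpr (T4.congr' heq)
    exact hin.hasDerivAt ((isOpen_S a).mem_nhds hz)
  exact ((differentiableAt_id.const_mul ((c : ℂ))).cexp).mul hg.differentiableAt

lemma integral_X_nonneg (c p : ℝ) (φ : ℝ → ℂ) :
    0 ≤ ∫ r in Set.Ioi (0:ℝ), ‖φ r‖ ^ p * r ^ (c * p - 1) := by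
  refine setIntegral_nonneg measurableSet_Ioi fun r hr => ?_
  exact mul_nonneg (Real.rpow_nonneg (norm_nonneg _) _) (Real.rpow_nonneg (le_of_lt hr) _)

lemma xnormp_eq {p : ℝ} (hp : 0 < p) (c : ℝ) (φ : ℝ → ℂ) :
    Xnorm c p φ ^ p = ∫ r in Set.Ioi (0:ℝ), ‖φ r‖ ^ p * r ^ (c * p - 1) := by
  rw [Xnorm, ← Real.rpow_mul (integral_X_nonneg c p φ), one_div,
    inv_mul_cancel₀ (ne_of_gt hp), Real.rpow_one]

lemma hardyNorm_nonneg {c p a : ℝ} (ha : 0 < a) {f : ℝ × ℝ → ℂ}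
    (hbdd : BddAbove (hardyVals c p a f)) : 0 ≤ HardyNorm c p a f := by
  have hmem : (((Xnorm c p fun r => f (r, a/2)) ^ p + (Xnorm c p fun r => f (r, -(a/2))) ^ p) / 2)
      ^ (1/p) ∈ hardyVals c p a f := ⟨a/2, by linarith, by linarith, rfl⟩
  refine le_trans (Real.rpow_nonneg ?_ (1/p)) (le_csSup hbdd hmem)
  have h1 : (0:ℝ) ≤ (Xnorm c p fun r => f (r, a/2)) ^ p :=
    Real.rpow_nonneg (Real.rpow_nonneg (integral_X_nonneg _ _ _) _) p
  have h2 : (0:ℝ) ≤ (Xnorm c p fun r => f (r, -(a/2))) ^ p :=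
    Real.rpow_nonneg (Real.rpow_nonneg (integral_X_nonneg _ _ _) _) p
  linarith

lemma hardy_line_bound {c p a : ℝ} (hp : 1 ≤ p) {f : ℝ × ℝ → ℂ}
    (hbdd : BddAbove (hardyVals c p a f)) {y : ℝ} (hy0 : y ≠ 0) (hya : |y| < a) :
    (∫ r in Set.Ioi (0:ℝ), ‖f (r, y)‖ ^ p * r ^ (c * p - 1))
      ≤ 2 * (HardyNorm c p a f) ^ p := by
  have hp0 : 0 < p := lt_of_lt_of_le one_pos hp
  set θ := |y| with hθ
  have hθ0 : 0 < θ := abs_pos.mpr hy0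
  have ha : 0 < a := lt_trans hθ0 hya
  set X₁ := Xnorm c p fun r => f (r, θ) with hX₁
  set X₂ := Xnorm c p fun r => f (r, -θ) with hX₂
  set v := ((X₁ ^ p + X₂ ^ p) / 2) ^ (1/p) with hv
  have hmem : v ∈ hardyVals c p a f := ⟨θ, hθ0, hya, rfl⟩
  have hvH : v ≤ HardyNorm c p a f := le_csSup hbdd hmem
  have hI₁ : X₁ ^ p = ∫ r in Set.Ioi (0:ℝ), ‖f (r, θ)‖ ^ p * r ^ (c * p - 1) :=
    xnormp_eq hp0 c _
  have hI₂ : X₂ ^ p = ∫ r in Set.Ioi (0:ℝ), ‖f (r, -θ)‖ ^ p * r ^ (c * p - 1) :=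
    xnormp_eq hp0 c _
  have hI₁0 : 0 ≤ X₁ ^ p := hI₁ ▸ integral_X_nonneg c p _
  have hI₂0 : 0 ≤ X₂ ^ p := hI₂ ▸ integral_X_nonneg c p _
  have hbase : 0 ≤ (X₁ ^ p + X₂ ^ p) / 2 := by linarith
  have hv0 : 0 ≤ v := Real.rpow_nonneg hbase _
  have hvp : v ^ p = (X₁ ^ p + X₂ ^ p) / 2 := by
    rw [hv, ← Real.rpow_mul hbase, one_div, inv_mul_cancel₀ (ne_of_gt hp0), Real.rpow_one]
  have hHp : v ^ p ≤ (HardyNorm c p a f) ^ p := Real.rpow_le_rpow hv0 hvH (le_of_lt hp0)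
  rw [hvp] at hHp
  have hkey : X₁ ^ p + X₂ ^ p ≤ 2 * (HardyNorm c p a f) ^ p := by linarith
  rcases abs_cases y with ⟨h1, _⟩ | ⟨h1, _⟩
  · have hyθ : y = θ := h1.symm
    rw [hyθ, ← hI₁]; linarith
  · have hyθ : y = -θ := by rw [hθ, h1]; ring_nf
    rw [hyθ, ← hI₂]; linarith

lemma circle_mean {a p : ℝ} (hp : 1 ≤ p) {h : ℂ → ℂ}
    (hd : ∀ z : ℂ, |z.im| < a → DifferentiableAt ℂ h z)
    {z₀ : ℂ} {s : ℝ} (hs : 0 < s) (hsub : ∀ w : ℂ, dist w z₀ ≤ s → |w.im| < a) :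
    2 * Real.pi * ‖h z₀‖ ^ p
      ≤ ∫ t in Set.Ioo (-Real.pi) Real.pi, ‖h (circleMap z₀ s t)‖ ^ p := by
  have hp0 : 0 < p := lt_of_lt_of_le one_pos hp
  -- continuity of the circle parametrization composed with h
  have hcm : ∀ t : ℝ, dist (circleMap z₀ s t) z₀ ≤ s := by
    intro t
    rw [dist_eq_norm, circleMap_sub_center]
    simp [circleMap, abs_of_pos hs]
  have hcont : Continuous fun t : ℝ => h (circleMap z₀ s t) := by
    rw [continuous_iff_continuousAt]
    intro t
    exact ((hd _ (hsub _ (hcm t))).continuousAt).comp (continuous_circleMap z₀ s).continuousAt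
  -- Cauchy integral formula at the center
  have hDiff : DiffContOnCl ℂ h (Metric.ball z₀ s) := by
    apply DifferentiableOn.diffContOnCl
    rw [closure_ball z₀ (ne_of_gt hs)]
    exact fun w hw => (hd w (hsub w (Metric.mem_closedBall.mp hw))).differentiableWithinAt
  have hC := hDiff.circleIntegral_sub_inv_smul (Metric.mem_ball_self hs)
  have hC2 : (∫ t in (0:ℝ)..2 * Real.pi, Complex.I * h (circleMap z₀ s t))
      = (2 * Real.pi * Complex.I) • h z₀ := by
    rw [← hC, circleIntegral]
    apply intervalIntegral.integral_congr
    intro t _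
    have hne : circleMap 0 s t ≠ 0 := by
      simpa using circleMap_ne_center (c := (0:ℂ)) (ne_of_gt hs) (θ := t)
    simp only [deriv_circleMap, circleMap_sub_center, smul_eq_mul]
    field_simp
  have hmean : (∫ t in (0:ℝ)..2 * Real.pi, h (circleMap z₀ s t)) = (2 * Real.pi) * h z₀ := by
    have := hC2
    rw [intervalIntegral.integral_const_mul, smul_eq_mul] at this
    have hIne : (Complex.I : ℂ) ≠ 0 := Complex.I_ne_zero
    apply mul_left_cancel₀ hIne
    rw [this]; ring
  -- shift to (-π, π)
  have hper : Function.Periodic (fun t : ℝ => h (circleMap z₀ s t)) (2 * Real.pi) :=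
    (periodic_circleMap z₀ s).comp h
  have hshift : (∫ t in (0:ℝ)..2 * Real.pi, h (circleMap z₀ s t))
      = ∫ t in (-Real.pi)..Real.pi, h (circleMap z₀ s t) := by
    have := hper.intervalIntegral_add_eq 0 (-Real.pi)
    simp only [zero_add] at this
    rw [this]
    have hpi : -Real.pi + 2 * Real.pi = Real.pi := by ring
    rw [hpi]
  have hIoo : ∀ (F : ℝ → ℝ), (∫ t in (-Real.pi)..Real.pi, F t)
      = ∫ t in Set.Ioo (-Real.pi) Real.pi, F t := by
    intro F
    rw [intervalIntegral.integral_of_le (by linarith [Real.pi_pos]), integral_Ioc_eq_integral_Ioo]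
  have hIooC : (∫ t in (-Real.pi)..Real.pi, h (circleMap z₀ s t))
      = ∫ t in Set.Ioo (-Real.pi) Real.pi, h (circleMap z₀ s t) := by
    rw [intervalIntegral.integral_of_le (by linarith [Real.pi_pos]), integral_Ioc_eq_integral_Ioo]
  -- norm inequality
  have hnorm : 2 * Real.pi * ‖h z₀‖
      ≤ ∫ t in Set.Ioo (-Real.pi) Real.pi, ‖h (circleMap z₀ s t)‖ := by
    have h1 : ‖(2 * (Real.pi:ℂ)) * h z₀‖ = 2 * Real.pi * ‖h z₀‖ := by
      simp [norm_mul, Complex.norm_real, _root_.abs_of_nonneg Real.pi_nonneg]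
    calc 2 * Real.pi * ‖h z₀‖ = ‖∫ t in Set.Ioo (-Real.pi) Real.pi, h (circleMap z₀ s t)‖ := by
          rw [← hIooC, ← hshift, hmean, h1]
      _ ≤ ∫ t in Set.Ioo (-Real.pi) Real.pi, ‖h (circleMap z₀ s t)‖ :=
          norm_integral_le_integral_norm _
  -- Jensen's inequality on the circle
  have htwopi : (0:ℝ) < 2 * Real.pi := by linarith [Real.pi_pos]
  have hvol : volume (Set.Ioo (-Real.pi) Real.pi) = ENNReal.ofReal (2 * Real.pi) := by
    rw [Real.volume_Ioo]; congr 1; ring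
  have hvol0 : volume (Set.Ioo (-Real.pi) Real.pi) ≠ 0 := by
    rw [hvol]; exact (ENNReal.ofReal_pos.mpr htwopi).ne'
  have hvolT : volume (Set.Ioo (-Real.pi) Real.pi) ≠ ⊤ := by
    rw [hvol]; exact ENNReal.ofReal_ne_top
  have hGi : IntegrableOn (fun t : ℝ => ‖h (circleMap z₀ s t)‖) (Set.Ioo (-Real.pi) Real.pi) :=
    (hcont.norm.integrableOn_Icc).mono_set Set.Ioo_subset_Icc_self
  have hGpi : IntegrableOn (fun t : ℝ => ‖h (circleMap z₀ s t)‖ ^ p)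
      (Set.Ioo (-Real.pi) Real.pi) :=
    ((hcont.norm.rpow_const (fun t => Or.inr (le_of_lt hp0))).integrableOn_Icc).mono_set
      Set.Ioo_subset_Icc_self
  have hjen := (convexOn_rpow hp).map_set_average_le
    (f := fun t : ℝ => ‖h (circleMap z₀ s t)‖) (μ := volume)
    ((continuousOn_id.rpow_const (fun x _ => Or.inr (le_of_lt hp0)))) isClosed_Ici hvol0 hvolT
    (Filter.Eventually.of_forall fun t => norm_nonneg _) hGi hGpi
  -- unfold averages
  have havg : ∀ (F : ℝ → ℝ), (⨍ t in Set.Ioo (-Real.pi) Real.pi, F t)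
      = (2 * Real.pi)⁻¹ * ∫ t in Set.Ioo (-Real.pi) Real.pi, F t := by
    intro F
    rw [setAverage_eq, measureReal_def, hvol, ENNReal.toReal_ofReal (le_of_lt htwopi), smul_eq_mul]
  rw [havg, havg] at hjen
  have hbound : ‖h z₀‖ ≤ (2 * Real.pi)⁻¹ * ∫ t in Set.Ioo (-Real.pi) Real.pi,
      ‖h (circleMap z₀ s t)‖ := by
    rw [inv_mul_eq_div, le_div_iff₀' htwopi]
    exact hnorm
  have h2 : ‖h z₀‖ ^ p ≤ ((2 * Real.pi)⁻¹ * ∫ t in Set.Ioo (-Real.pi) Real.pi,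
      ‖h (circleMap z₀ s t)‖) ^ p :=
    Real.rpow_le_rpow (norm_nonneg _) hbound (le_of_lt hp0)
  have h3 := le_trans h2 hjen
  calc 2 * Real.pi * ‖h z₀‖ ^ p
      ≤ 2 * Real.pi * ((2 * Real.pi)⁻¹ * ∫ t in Set.Ioo (-Real.pi) Real.pi,
          ‖h (circleMap z₀ s t)‖ ^ p) := by
        exact mul_le_mul_of_nonneg_left h3 (le_of_lt htwopi)
    _ = ∫ t in Set.Ioo (-Real.pi) Real.pi, ‖h (circleMap z₀ s t)‖ ^ p := by
        field_simp

lemma norm_h_pow {p : ℝ} (c x y : ℝ) (F : ℂ) :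
    ‖Complex.exp (c * (x + y*Complex.I)) * F‖ ^ p
      = |Real.exp x| • (‖F‖ ^ p * (Real.exp x) ^ (c * p - 1)) := by
  rw [norm_mul, Complex.norm_exp]
  have hre : ((c:ℂ) * (x + y*Complex.I)).re = c * x := by simp
  rw [hre, Real.mul_rpow (Real.exp_pos _).le (norm_nonneg _), ← Real.exp_mul,
    ← Real.exp_mul, smul_eq_mul, _root_.abs_of_pos (Real.exp_pos x)]
  rw [show Real.exp x * (‖F‖ ^ p * Real.exp (x * (c * p - 1)))
      = (Real.exp x * Real.exp (x * (c * p - 1))) * ‖F‖ ^ p by ring, ← Real.exp_add]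
  congr 2
  ring

lemma line_bound {c p a : ℝ} (hp : 1 ≤ p) {f : ℝ × ℝ → ℂ} (hf : MemHardy c p a f)
    {y : ℝ} (hy0 : y ≠ 0) (hya : |y| < a) :
    Integrable (fun x : ℝ => ‖Complex.exp (c * (x + y*Complex.I)) * f (Real.exp x, y)‖ ^ p)
        volume ∧
    (∫ x : ℝ, ‖Complex.exp (c * (x + y*Complex.I)) * f (Real.exp x, y)‖ ^ p)
       ≤ 2 * (HardyNorm c p a f) ^ p := by
  set g : ℝ → ℝ := fun r => ‖f (r, y)‖ ^ p * r ^ (c * p - 1) with hg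
  have hderiv : ∀ x ∈ (Set.univ : Set ℝ), HasDerivWithinAt Real.exp (Real.exp x) Set.univ x :=
    fun x _ => (Real.hasDerivAt_exp x).hasDerivWithinAt
  have hinj : Set.InjOn Real.exp Set.univ := Real.exp_injective.injOn
  have himg : Real.exp '' Set.univ = Set.Ioi (0:ℝ) := by rw [Set.image_univ, Real.range_exp]
  have hXi : IntegrableOn g (Set.Ioi (0:ℝ)) := (hf.2.1 y hya).2
  have hpt : (fun x : ℝ => |Real.exp x| • g (Real.exp x))
      = fun x : ℝ => ‖Complex.exp (c * (x + y*Complex.I)) * f (Real.exp x, y)‖ ^ p := by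
    funext x
    rw [norm_h_pow]
  have hint : Integrable
      (fun x : ℝ => ‖Complex.exp (c * (x + y*Complex.I)) * f (Real.exp x, y)‖ ^ p) volume := by
    rw [← hpt, ← integrableOn_univ]
    rw [← integrableOn_image_iff_integrableOn_abs_deriv_smul MeasurableSet.univ hderiv hinj g,
      himg]
    exact hXi
  refine ⟨hint, ?_⟩
  have hch := integral_image_eq_integral_abs_deriv_smul MeasurableSet.univ hderiv hinj g
  rw [himg, hpt, setIntegral_univ] at hch
  rw [← hch]
  exact hardy_line_bound hp hf.2.2 hy0 hya

end HardyAux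

/-- pointwise bound for functions in the Mellin–Hardy space: for
`0 < a₁ < a`, `|f(r,θ)| ≤ r^{-c} (4/(π(a-a₁)))^{1/p} ‖f‖_{H^p_c(ℍ_a)}` on `|θ| ≤ a₁`. -/
theorem hardy_pointwise_bound
    (c p a a₁ : ℝ) (hp : 1 ≤ p) (ha₁ : 0 < a₁) (ha : a₁ < a)
    (f : ℝ × ℝ → ℂ) (hf : MemHardy c p a f) :
    ∀ r θ : ℝ, 0 < r → |θ| ≤ a₁ →
      ‖f (r, θ)‖ ≤ r ^ (-c) * (4 / (Real.pi * (a - a₁))) ^ (1 / p) * HardyNorm c p a f := by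
  intro r θ hr hθ
  have hp0 : 0 < p := lt_of_lt_of_le one_pos hp
  have ha0 : 0 < a := lt_trans ha₁ ha
  have hπ : 0 < Real.pi := Real.pi_pos
  set δ := a - a₁ with hδdef
  have hδ : 0 < δ := by simp only [hδdef]; linarith
  set H := HardyNorm c p a f with hHdef
  have hH0 : 0 ≤ H := HardyAux.hardyNorm_nonneg ha0 hf.2.2
  set h : ℂ → ℂ := fun w => Complex.exp (c * w) * f (Real.exp w.re, w.im) with hhdef
  have hd : ∀ z : ℂ, |z.im| < a → DifferentiableAt ℂ h z :=
    fun z hz => HardyAux.differentiable_h c hf.1 hz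
  set x₀ := Real.log r with hx₀
  set z₀ : ℂ := (x₀ : ℂ) + (θ : ℂ) * Complex.I with hz₀
  have hz₀re : z₀.re = x₀ := by simp [hz₀]
  have hz₀im : z₀.im = θ := by simp [hz₀]
  set Iy := Set.Ioo (θ - δ) (θ + δ) with hIy
  have hIymeas : MeasurableSet Iy := measurableSet_Ioo
  have hmem_strip : ∀ y ∈ Iy, |y| < a := by
    intro y hy
    rw [abs_lt]
    rcases abs_le.mp hθ with ⟨h1, h2⟩
    rcases hy with ⟨hy1, hy2⟩
    constructor <;> [linarith; linarith]
  set u : ℝ × ℝ → ℝ := fun q => ‖h ((q.1 : ℂ) + (q.2 : ℂ) * Complex.I)‖ ^ p with hu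
  have hu_nonneg : ∀ q, 0 ≤ u q := fun q => Real.rpow_nonneg (norm_nonneg _) p
  have hslice : ∀ x y : ℝ, u (x, y)
      = ‖Complex.exp (c * ((x:ℂ) + (y:ℂ)*Complex.I)) * f (Real.exp x, y)‖ ^ p := by
    intro x y
    simp only [hu, hhdef]
    congr 3 <;> simp
  -- continuity of u on the strip
  have hucont : ∀ q : ℝ × ℝ, |q.2| < a → ContinuousAt u q := by
    intro q hq
    have h1 : ContinuousAt (fun q : ℝ × ℝ => ((q.1 : ℂ) + (q.2 : ℂ) * Complex.I)) q :=
      ((Complex.continuous_ofReal.comp continuous_fst).add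
        ((Complex.continuous_ofReal.comp continuous_snd).mul continuous_const)).continuousAt
    have h2 : ContinuousAt h ((q.1 : ℂ) + (q.2 : ℂ) * Complex.I) := by
      refine (hd _ ?_).continuousAt
      simpa using hq
    have h3 := ContinuousAt.comp (f := fun q : ℝ × ℝ => ((q.1 : ℂ) + (q.2 : ℂ) * Complex.I)) h2 h1
    exact (h3.norm).rpow_const (Or.inr (le_of_lt hp0))
  -- the product measure on the rectangle
  set ν := (volume : Measure ℝ).restrict Iy with hν
  have hrect : (volume : Measure (ℝ × ℝ)).restrict (Set.univ ×ˢ Iy)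
      = ((volume : Measure ℝ).prod ν) := by
    rw [MeasureTheory.Measure.volume_eq_prod, ← Measure.prod_restrict, Measure.restrict_univ]
  have hmeasu : AEStronglyMeasurable u ((volume : Measure ℝ).prod ν) := by
    rw [← hrect]
    refine ContinuousOn.aestronglyMeasurable ?_ (MeasurableSet.univ.prod hIymeas)
    intro q hq
    exact (hucont q (hmem_strip q.2 hq.2)).continuousWithinAt
  -- slice facts
  have hae_slice : ∀ᵐ y ∂ν, Integrable (fun x => u (x, y)) volume ∧
      (∫ x, u (x, y)) ≤ 2 * H ^ p := by
    have hν0 : ν {0} = 0 := by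
      rw [hν, Measure.restrict_apply (measurableSet_singleton 0)]
      refine measure_mono_null Set.inter_subset_left ?_
      exact Real.volume_singleton
    have h0 : ∀ᵐ y ∂ν, y ≠ 0 := by
      rw [Filter.eventually_iff, mem_ae_iff]
      convert hν0 using 2
      ext y; simp
    filter_upwards [h0, ae_restrict_mem hIymeas] with y hy0 hyI
    have hya : |y| < a := hmem_strip y hyI
    have hlb := HardyAux.line_bound hp hf hy0 hya
    constructor
    · refine hlb.1.congr ?_
      filter_upwards with x
      exact (hslice x y).symm
    · calc (∫ x, u (x, y)) = ∫ x : ℝ, ‖Complex.exp (c * ((x:ℂ) + (y:ℂ)*Complex.I))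
            * f (Real.exp x, y)‖ ^ p := by
            refine integral_congr_ae ?_
            filter_upwards with x
            exact hslice x y
        _ ≤ 2 * H ^ p := hlb.2
  -- integrability of u on the rectangle
  have hInt : Integrable u ((volume : Measure ℝ).prod ν) := by
    rw [integrable_prod_iff' hmeasu]
    constructor
    · filter_upwards [hae_slice] with y hy using hy.1
    · have hmeas2 : AEStronglyMeasurable (fun y => ∫ x, ‖u (x, y)‖ ∂volume) ν :=
        (hmeasu.norm.prod_swap).integral_prod_right'
      refine Integrable.mono' (g := fun _ => 2 * H ^ p) ?_ hmeas2 ?_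
      · refine (integrableOn_const_iff).mpr (Or.inr ?_)
        rw [hIy]
        exact measure_Ioo_lt_top
      · filter_upwards [hae_slice] with y hy
        have heq : (∫ x, ‖u (x, y)‖ ∂volume) = ∫ x, u (x, y) := by
          refine integral_congr_ae ?_
          filter_upwards with x
          exact Real.norm_of_nonneg (hu_nonneg _)
        rw [Real.norm_of_nonneg, heq]
        · exact hy.2
        · rw [heq]
          exact integral_nonneg fun x => hu_nonneg _
  -- upper bound on the rectangle integral
  have hUpper : (∫ q, u q ∂((volume : Measure ℝ).prod ν)) ≤ 2 * δ * (2 * H ^ p) := by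
    rw [integral_prod_symm u hInt]
    have h1 : (∫ y, (∫ x, u (x, y)) ∂ν) ≤ ∫ _ in Iy, (2 * H ^ p) := by
      refine integral_mono_ae hInt.integral_prod_right ?_ ?_
      · exact (integrableOn_const_iff).mpr (Or.inr (hIy ▸ measure_Ioo_lt_top))
      · filter_upwards [hae_slice] with y hy using hy.2
    refine le_trans h1 ?_
    rw [setIntegral_const, smul_eq_mul, hIy, Real.volume_real_Ioo,
      max_eq_left (by linarith)]
    have : θ + δ - (θ - δ) = 2 * δ := by ring
    rw [this]
  -- polar coordinates
  set P : Set (ℝ × ℝ) := Set.Ioo 0 δ ×ˢ Set.Ioo (-Real.pi) Real.pi with hP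
  have hPmeas : MeasurableSet P := measurableSet_Ioo.prod measurableSet_Ioo
  set e : ℝ × ℝ → ℝ × ℝ := fun q => ((x₀, θ) : ℝ × ℝ) + polarCoord.symm q with he
  set B : ℝ × ℝ → (ℝ × ℝ) →L[ℝ] (ℝ × ℝ) := fun q =>
    LinearMap.toContinuousLinearMap (Matrix.toLin (Module.Basis.finTwoProd ℝ) (Module.Basis.finTwoProd ℝ)
      !![Real.cos q.2, -q.1 * Real.sin q.2; Real.sin q.2, q.1 * Real.cos q.2]) with hB
  have he' : ∀ q ∈ P, HasFDerivWithinAt e (B q) P q :=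
    fun q _ => ((hasFDerivAt_polarCoord_symm q).const_add ((x₀, θ) : ℝ × ℝ)).hasFDerivWithinAt
  have hdet : ∀ q : ℝ × ℝ, (B q).det = q.1 := by
    intro q
    conv_rhs => rw [← one_mul q.1, ← Real.cos_sq_add_sin_sq q.2]
    simp only [hB, neg_mul, LinearMap.det_toContinuousLinearMap, LinearMap.det_toLin,
      Matrix.det_fin_two_of, sub_neg_eq_add]
    ring
  have hPsub : P ⊆ polarCoord.symm.source := by
    rintro q hq
    rw [OpenPartialHomeomorph.symm_source, polarCoord_target]
    exact ⟨hq.1.1, hq.2⟩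
  have hinj : Set.InjOn e P := by
    intro q1 h1 q2 h2 hq
    exact polarCoord.symm.injOn (hPsub h1) (hPsub h2) (add_left_cancel hq)
  -- the image is inside the rectangle
  have hAsub : e '' P ⊆ Set.univ ×ˢ Iy := by
    rintro w ⟨q, hq, rfl⟩
    refine ⟨Set.mem_univ _, ?_⟩
    have h1 : (e q).2 = θ + q.1 * Real.sin q.2 := by
      simp [he, polarCoord_symm_apply]
    rw [h1]
    have hs1 : |q.1 * Real.sin q.2| < δ := by
      rw [abs_mul, abs_of_pos hq.1.1]
      calc q.1 * |Real.sin q.2| ≤ q.1 * 1 :=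
            mul_le_mul_of_nonneg_left (Real.abs_sin_le_one q.2) (le_of_lt hq.1.1)
        _ = q.1 := mul_one _
        _ < δ := hq.1.2
    rcases abs_lt.mp hs1 with ⟨hl, hr2⟩
    exact ⟨by linarith, by linarith⟩
  -- identification with the circle map
  have hcirc : ∀ q : ℝ × ℝ, (((e q).1 : ℂ) + ((e q).2 : ℂ) * Complex.I)
      = circleMap z₀ q.1 q.2 := by
    intro q
    have h1 : e q = (x₀ + q.1 * Real.cos q.2, θ + q.1 * Real.sin q.2) := by
      simp [he, polarCoord_symm_apply]
    rw [h1, circleMap, hz₀]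
    apply Complex.ext <;>
      simp [Complex.exp_mul_I, Complex.cos_ofReal_re, Complex.sin_ofReal_re] <;> ring
  have hue : ∀ q : ℝ × ℝ, u (e q) = ‖h (circleMap z₀ q.1 q.2)‖ ^ p := by
    intro q
    simp only [hu]
    rw [hcirc]
  -- change of variables
  have hIA : IntegrableOn u (e '' P) volume := by
    have : IntegrableOn u (Set.univ ×ˢ Iy) volume := by
      rw [IntegrableOn, hrect]
      exact hInt
    exact this.mono_set hAsub
  have hcv : (∫ q in e '' P, u q) = ∫ q in P, q.1 * u (e q) := by
    rw [integral_image_eq_integral_abs_det_fderiv_smul volume hPmeas he' hinj u]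
    refine setIntegral_congr_fun hPmeas fun q hq => ?_
    rw [hdet, smul_eq_mul, abs_of_pos hq.1.1]
  have hcvi : IntegrableOn (fun q => q.1 * u (e q)) P volume := by
    have h1 := (integrableOn_image_iff_integrableOn_abs_det_fderiv_smul
      volume hPmeas he' hinj u).mp hIA
    refine h1.congr_fun (fun q hq => ?_) hPmeas
    beta_reduce
    rw [hdet, smul_eq_mul, abs_of_pos hq.1.1]
  -- Fubini lower bound on P
  set νs := (volume : Measure ℝ).restrict (Set.Ioo (0:ℝ) δ) with hνs
  set νt := (volume : Measure ℝ).restrict (Set.Ioo (-Real.pi) Real.pi) with hνt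
  have hPrect : (volume : Measure (ℝ × ℝ)).restrict P = νs.prod νt := by
    rw [MeasureTheory.Measure.volume_eq_prod, ← Measure.prod_restrict]
  have hcviP : Integrable (fun q : ℝ × ℝ => q.1 * u (e q)) (νs.prod νt) := by
    rw [← hPrect]
    exact hcvi
  have hLow : Real.pi * δ ^ 2 * ‖h z₀‖ ^ p ≤ ∫ q in P, q.1 * u (e q) := by
    have hinner : ∀ s ∈ Set.Ioo (0:ℝ) δ,
        (2 * Real.pi * ‖h z₀‖ ^ p) * s ≤ ∫ t, s * u (e (s, t)) ∂νt := by
      intro s hs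
      have hmean : 2 * Real.pi * ‖h z₀‖ ^ p
          ≤ ∫ t in Set.Ioo (-Real.pi) Real.pi, ‖h (circleMap z₀ s t)‖ ^ p := by
        refine HardyAux.circle_mean hp hd hs.1 fun w hw => ?_
        have h1 : |w.im - θ| ≤ s := by
          rw [← hz₀im]
          calc |w.im - z₀.im| = |(w - z₀).im| := by rw [Complex.sub_im]
            _ ≤ ‖w - z₀‖ := Complex.abs_im_le_norm _
            _ = dist w z₀ := (Complex.dist_eq w z₀).symm
            _ ≤ s := hw
        rcases abs_le.mp h1 with ⟨h2, h3⟩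
        rcases abs_le.mp hθ with ⟨h4, h5⟩
        rw [abs_lt]
        constructor <;> [nlinarith [hs.2]; nlinarith [hs.2]]
      calc (2 * Real.pi * ‖h z₀‖ ^ p) * s = s * (2 * Real.pi * ‖h z₀‖ ^ p) := by ring
        _ ≤ s * ∫ t in Set.Ioo (-Real.pi) Real.pi, ‖h (circleMap z₀ s t)‖ ^ p :=
            mul_le_mul_of_nonneg_left hmean (le_of_lt hs.1)
        _ = ∫ t, s * u (e (s, t)) ∂νt := by
            have heq1 : (fun t : ℝ => s * u (e (s, t)))
                = fun t : ℝ => s * ‖h (circleMap z₀ s t)‖ ^ p := by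
              funext t
              rw [hue (s, t)]
            rw [heq1, hνt, ← integral_const_mul]
    have hLHSint : Integrable (fun s : ℝ => (2 * Real.pi * ‖h z₀‖ ^ p) * s) νs := by
      rw [hνs]
      exact ((continuous_const.mul continuous_id).integrableOn_Icc).mono_set
        Set.Ioo_subset_Icc_self
    have hmono : (∫ s, (2 * Real.pi * ‖h z₀‖ ^ p) * s ∂νs)
        ≤ ∫ s, (∫ t, s * u (e (s, t)) ∂νt) ∂νs := by
      refine integral_mono_ae hLHSint hcviP.integral_prod_left ?_
      rw [hνs]
      filter_upwards [ae_restrict_mem measurableSet_Ioo] with s hs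
      exact hinner s hs
    have hsval : (∫ s in Set.Ioo (0:ℝ) δ, s) = δ ^ 2 / 2 := by
      rw [← integral_Ioc_eq_integral_Ioo, ← intervalIntegral.integral_of_le (le_of_lt hδ),
        integral_id]
      ring
    have hval : (∫ s, (2 * Real.pi * ‖h z₀‖ ^ p) * s ∂νs)
        = Real.pi * δ ^ 2 * ‖h z₀‖ ^ p := by
      rw [hνs, integral_const_mul, hsval]
      ring
    calc Real.pi * δ ^ 2 * ‖h z₀‖ ^ p
        = ∫ s, (2 * Real.pi * ‖h z₀‖ ^ p) * s ∂νs := hval.symm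
      _ ≤ ∫ s, (∫ t, s * u (e (s, t)) ∂νt) ∂νs := hmono
      _ = ∫ q, q.1 * u (e q) ∂(νs.prod νt) :=
          (integral_prod (fun q : ℝ × ℝ => q.1 * u (e q)) hcviP).symm
      _ = ∫ q in P, q.1 * u (e q) := by rw [← hPrect]
  -- assemble the chain
  have hchain : Real.pi * δ ^ 2 * ‖h z₀‖ ^ p ≤ 2 * δ * (2 * H ^ p) := by
    refine le_trans hLow ?_
    rw [← hcv]
    refine le_trans ?_ hUpper
    have h1 : (∫ q in e '' P, u q) ≤ ∫ q in Set.univ ×ˢ Iy, u q := by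
      refine setIntegral_mono_set ?_ ?_ (HasSubset.Subset.eventuallyLE hAsub)
      · rw [IntegrableOn, hrect]
        exact hInt
      · exact Filter.Eventually.of_forall fun q => hu_nonneg q
    refine le_trans h1 (le_of_eq ?_)
    rw [show (∫ q in Set.univ ×ˢ Iy, u q)
        = ∫ q, u q ∂((volume : Measure (ℝ×ℝ)).restrict (Set.univ ×ˢ Iy)) from rfl, hrect]
  -- pointwise bound for h
  have hzp : ‖h z₀‖ ^ p ≤ 4 / (Real.pi * δ) * H ^ p := by
    rw [div_mul_eq_mul_div, le_div_iff₀ (mul_pos hπ hδ)]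
    have h2 : Real.pi * δ ^ 2 * ‖h z₀‖ ^ p = (‖h z₀‖ ^ p * (Real.pi * δ)) * δ := by ring
    have h3 : 2 * δ * (2 * H ^ p) = (4 * H ^ p) * δ := by ring
    rw [h2, h3] at hchain
    exact le_of_mul_le_mul_right hchain hδ
  have hnorm_h : ‖h z₀‖ ≤ (4 / (Real.pi * δ)) ^ (1/p) * H := by
    have h1 : ‖h z₀‖ = (‖h z₀‖ ^ p) ^ (1/p) := by
      rw [← Real.rpow_mul (norm_nonneg _), mul_one_div_cancel (ne_of_gt hp0), Real.rpow_one]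
    rw [h1]
    calc (‖h z₀‖ ^ p) ^ (1/p) ≤ (4 / (Real.pi * δ) * H ^ p) ^ (1/p) :=
        Real.rpow_le_rpow (Real.rpow_nonneg (norm_nonneg _) p) hzp (le_of_lt (by positivity : (0:ℝ) < 1/p))
      _ = (4 / (Real.pi * δ)) ^ (1/p) * H := by
          rw [Real.mul_rpow (le_of_lt (div_pos four_pos (mul_pos hπ hδ))) (Real.rpow_nonneg hH0 p),
            ← Real.rpow_mul hH0, mul_one_div_cancel (ne_of_gt hp0), Real.rpow_one]
  -- conclusion
  have hfr : ‖f (r, θ)‖ = Real.exp (-(c * x₀)) * ‖h z₀‖ := by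
    have h1 : h z₀ = Complex.exp (c * z₀) * f (r, θ) := by
      simp only [hhdef]
      rw [hz₀re, hz₀im, hx₀, Real.exp_log hr]
    rw [h1, norm_mul]
    have h3 : ‖Complex.exp ((c:ℂ) * z₀)‖ = Real.exp (c * x₀) := by
      rw [Complex.norm_exp]
      congr 1
      simp [hz₀]
    rw [h3, ← mul_assoc, ← Real.exp_add]
    simp
  have hrc : r ^ (-c) = Real.exp (-(c * x₀)) := by
    rw [Real.rpow_def_of_pos hr]
    congr 1
    rw [hx₀]
    ring
  rw [hfr]
  calc Real.exp (-(c*x₀)) * ‖h z₀‖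
      ≤ Real.exp (-(c*x₀)) * ((4/(Real.pi*δ))^(1/p) * H) :=
        mul_le_mul_of_nonneg_left hnorm_h (Real.exp_nonneg _)
    _ = r ^ (-c) * (4/(Real.pi*δ))^(1/p) * H := by rw [hrc]; ring
end
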